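/- arXiv:2603.17858 — 4 statements merged into one kernel-verified Lean document; each statement's English description precedes it below -/
import Mathlib

section
/- Let G = (V,E) be a finite graph, let v be a vertex of G and let (λ_u)_{u∈V} be a vector of variables. Then there exists a vector of variables (λ̃_w)_{w ∈ V(T_SAW(G,v))} with λ̃_w ∈ {λ_u : u ∈ V} for each vertex w of T_SAW(G,v), such that R_{T_SAW(G,v),v}(λ̃) = R_{G,v}(λ⃗). Moreover, for any vertex u of T_SAW(G,v), the subtree of T_SAW(G,v) consisting of those vertices w such that u lies on the unique path from w to v, rooted at u, is the self-avoiding-walk tree of an induced subgraph of G. -/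
open scoped Classical

noncomputable section

structure HCGraph (V : Type) where
  verts : Finset V
  adj : V → V → Bool

namespace HCGraph

variable {V : Type} {K : Type} [Field K]

/-- The simple graph underlying a `HCGraph`: adjacency restricted to the vertex set,
symmetrized and with loops removed. -/
def toSG (G : HCGraph V) : SimpleGraph V where
  Adj u v := u ≠ v ∧ u ∈ G.verts ∧ v ∈ G.verts ∧ (G.adj u v = true ∨ G.adj v u = true)
  symm := by
    refine ⟨?_⟩
    intro u v h
    exact ⟨h.1.symm, h.2.2.1, h.2.1, h.2.2.2.symm⟩
  loopless := by
    refine ⟨?_⟩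
    intro v h
    exact h.1 rfl

/-- A `HCGraph` is simple if its adjacency function is symmetric and irreflexive. -/
def IsSimple (G : HCGraph V) : Prop :=
  (∀ u v, G.adj u v = G.adj v u) ∧ ∀ v, G.adj v v = false

/-- `I` is an independent set of `G`. -/
def IsInd (G : HCGraph V) (I : Finset V) : Prop :=
  I ⊆ G.verts ∧ ∀ u ∈ I, ∀ w ∈ I, G.adj u w = false

/-- The collection of independent sets of `G`. -/
def indepSets (G : HCGraph V) : Finset (Finset V) :=
  G.verts.powerset.filter fun I => ∀ u ∈ I, ∀ w ∈ I, G.adj u w = false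

/-- The independence polynomial (partition function of the hard-core model). -/
def Z (G : HCGraph V) (x : K) : K := ∑ I ∈ G.indepSets, x ^ I.card

/-- Partition function restricted to independent sets containing `v`. -/
def Zin (G : HCGraph V) (v : V) (x : K) : K :=
  ∑ I ∈ G.indepSets.filter (fun I => v ∈ I), x ^ I.card

/-- Partition function restricted to independent sets avoiding `v`. -/
def Zout (G : HCGraph V) (v : V) (x : K) : K :=
  ∑ I ∈ G.indepSets.filter (fun I => v ∉ I), x ^ I.card

/-- The occupation ratio at `v`. -/
def ratio (G : HCGraph V) (v : V) (x : K) : K := G.Zin v x / G.Zout v x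

/-- Multivariate independence polynomial. -/
def Zm (G : HCGraph V) (x : V → K) : K := ∑ I ∈ G.indepSets, ∏ u ∈ I, x u

def Zmin (G : HCGraph V) (v : V) (x : V → K) : K :=
  ∑ I ∈ G.indepSets.filter (fun I => v ∈ I), ∏ u ∈ I, x u

def Zmout (G : HCGraph V) (v : V) (x : V → K) : K :=
  ∑ I ∈ G.indepSets.filter (fun I => v ∉ I), ∏ u ∈ I, x u

/-- Multivariate occupation ratio at `v`. -/
def ratioM (G : HCGraph V) (v : V) (x : V → K) : K := G.Zmin v x / G.Zmout v x

/-- The set of vertices at graph distance `ℓ` from `v`. -/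
def sphere (G : HCGraph V) (v : V) (ℓ : ℕ) : Finset V :=
  G.verts.filter fun u => G.toSG.Reachable v u ∧ G.toSG.dist v u = ℓ

/-- The neighbours of `v` in `G`. -/
def nbr (G : HCGraph V) (v : V) : Finset V := G.verts.filter fun u => G.toSG.Adj v u

/-- `G` has maximum degree at most `Δ`. -/
def maxDegLE (G : HCGraph V) (Δ : ℕ) : Prop := ∀ v, (G.nbr v).card ≤ Δ

variable [DecidableEq V]

/-- The induced subgraph of `G` on `S`. -/
def induce (G : HCGraph V) (S : Finset V) : HCGraph V := ⟨G.verts ∩ S, G.adj⟩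

/-- Delete the vertex `v` from `G`. -/
def eraseVert (G : HCGraph V) (v : V) : HCGraph V := ⟨G.verts.erase v, G.adj⟩

/-- The collection of independent sets compatible with the boundary condition `σ`
     on `D` (the sets do not use vertices of `D` and together with the vertices of `D`
     that `σ` puts "in" they are independent). -/
def condSets (G : HCGraph V) (D : Finset V) (σ : V → Bool) : Finset (Finset V) :=
  (G.verts \ D).powerset.filter fun I => G.IsInd (I ∪ D.filter fun w => σ w = true)

def ZinBC (G : HCGraph V) (D : Finset V) (σ : V → Bool) (v : V) (x : K) : K :=
  ∑ I ∈ (G.condSets D σ).filter (fun I => v ∈ I), x ^ I.card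

def ZoutBC (G : HCGraph V) (D : Finset V) (σ : V → Bool) (v : V) (x : K) : K :=
  ∑ I ∈ (G.condSets D σ).filter (fun I => v ∉ I), x ^ I.card

/-- The occupation ratio at `v` conditioned on the boundary condition `σ` on `D`. -/
def ratioBC (G : HCGraph V) (D : Finset V) (σ : V → Bool) (v : V) (x : K) : K :=
  G.ZinBC D σ v x / G.ZoutBC D σ v x

/-- `σ` is a valid boundary condition on `D ⊆ V(G)`: the vertices declared "in" form an
independent set. -/
def ValidBC (G : HCGraph V) (D : Finset V) (σ : V → Bool) : Prop :=
  D ⊆ G.verts ∧ G.IsInd (D.filter fun w => σ w = true)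

end HCGraph

/-- Sorted list of neighbours of `v` (fixed total order on `ℕ`). -/
def nbrList (G : HCGraph ℕ) (v : ℕ) : List ℕ := (G.nbr v).sort (· ≤ ·)

/-- Fueled construction of the tree of self-avoiding walks.  The vertices of the tree are
reversed walks in `G`; the root of `TSAWAux n G v` is `[v]`, and the subtree hanging from
the `i`-th neighbour `vᵢ` of `v` is the self-avoiding walk tree of `G - {v, v₁, …, vᵢ₋₁}`
rooted at `vᵢ`, with `v` appended to each of its vertex labels. -/
def TSAWAux : ℕ → HCGraph ℕ → ℕ → HCGraph (List ℕ)
  | 0, _, v => ⟨{[v]}, fun _ _ => false⟩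
  | n+1, G, v =>
    let nbrs := nbrList G v
    let trees : List (HCGraph (List ℕ)) :=
      (List.range nbrs.length).map fun i =>
        TSAWAux n ((nbrs.take i).foldl HCGraph.eraseVert (G.eraseVert v)) (nbrs.getD i 0)
    ⟨trees.foldr (fun T acc => T.verts.image (fun w => w ++ [v]) ∪ acc) {[v]},
     fun x y =>
       (decide (x = [v]) && nbrs.any fun u => decide (y = [u, v])) ||
       (decide (y = [v]) && nbrs.any fun u => decide (x = [u, v])) ||
       (trees.any fun T =>
         decide (x.dropLast ∈ T.verts) && decide (y.dropLast ∈ T.verts) &&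
           T.adj x.dropLast y.dropLast)⟩

/-- The tree of self-avoiding walks of `G` starting at `v`; its root is the vertex `[v]`. -/
def TSAW (G : HCGraph ℕ) (v : ℕ) : HCGraph (List ℕ) := TSAWAux G.verts.card G v

/-- Very strong spatial mixing with constant `C` and rate `α` for the hard-core model at
fugacity `lam` on the family `𝒢`. -/
def VSSMwith (𝒢 : Set (HCGraph ℕ)) (lam C α : ℝ) : Prop :=
  ∀ G ∈ 𝒢, ∀ S : Finset ℕ, ∀ v ∈ (G.induce S).verts, ∀ ℓ : ℕ, 0 < ℓ →
    ∀ σ τ : List ℕ → Bool,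
      (TSAW (G.induce S) v).ValidBC ((TSAW (G.induce S) v).sphere [v] ℓ) σ →
      (TSAW (G.induce S) v).ValidBC ((TSAW (G.induce S) v).sphere [v] ℓ) τ →
      |(TSAW (G.induce S) v).ratioBC ((TSAW (G.induce S) v).sphere [v] ℓ) σ [v] lam -
        (TSAW (G.induce S) v).ratioBC ((TSAW (G.induce S) v).sphere [v] ℓ) τ [v] lam|
        ≤ C * α ^ ℓ

/-- Very strong spatial mixing for the hard-core model at fugacity `lam` on `𝒢`. -/
def VSSM (𝒢 : Set (HCGraph ℕ)) (lam : ℝ) : Prop :=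
  ∃ C : ℝ, 0 < C ∧ ∃ α : ℝ, 0 ≤ α ∧ α < 1 ∧ VSSMwith 𝒢 lam C α

end

noncomputable section

/-- The field of multivariate rational functions over `ℂ` in variables indexed by `ℕ`. -/
abbrev RatField : Type := FractionRing (MvPolynomial ℕ ℂ)

/-- The variable `λ_u` as an element of the field of rational functions. -/
def Xvar (u : ℕ) : RatField :=
  algebraMap (MvPolynomial ℕ ℂ) RatField (MvPolynomial.X u)

/-- The subtree of a tree `T` rooted at `root` hanging below the vertex `u`: it consists of
the vertices `w` such that `u` lies on the (unique) path from `w` to `root`. -/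
def subtreeAt {V : Type} (T : HCGraph V) (root u : V) : HCGraph V :=
  ⟨T.verts.filter
      (fun w => T.toSG.Reachable w u ∧
        T.toSG.dist w root = T.toSG.dist w u + T.toSG.dist u root),
    T.adj⟩

/-- An isomorphism of rooted graphs: a bijection between the vertex sets mapping root to
root and preserving adjacency. -/
def RootedIso {α β : Type} (G : HCGraph α) (a : α) (H : HCGraph β) (b : β) : Prop :=
  ∃ f : α → β, f a = b ∧ Set.BijOn f ↑G.verts ↑H.verts ∧
    ∀ x ∈ G.verts, ∀ y ∈ G.verts, (G.toSG.Adj x y ↔ H.toSG.Adj (f x) (f y))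


/-!
Both ratios obey Weitz's recursion `R(v) = λ_v ∏ᵢ (1 + Rᵢ)⁻¹`. In the tree the branches below
the root share no edges, so the partition functions factor over them. In the graph, deleting the
neighbours `v₀, …, v_{d-1}` of `v` one at a time telescopes `Z(G - N[v]) / Z(G - v)` into
`∏ᵢ Z_out(Gᵢ, vᵢ) / Z(Gᵢ)`, and `Gᵢ` is exactly the graph whose tree hangs below `vᵢ`.
Labelling each tree vertex (a reversed walk) by the variable of its endpoint, induction on the
number of vertices matches the two recursions; generic variables keep every partition function
nonzero.

For the subtrees, the parent of a tree vertex `w` is `w.tail`, so along a walk from `w` to `u`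
each step changes the length by one and `|w| ≤ length + |u|`, with equality only if `u` is a
suffix of `w`. Hence the subtree below `u` is the set of vertices ending in `u`; dropping the
common last entry identifies it with a subtree of one branch, to which induction applies.
-/

open Finset

namespace HCGraph

variable {α β : Type} {K : Type} [Field K]

@[simp] lemma mem_indepSets {G : HCGraph α} {I : Finset α} :
    I ∈ G.indepSets ↔ I ⊆ G.verts ∧ ∀ u ∈ I, ∀ w ∈ I, G.adj u w = false := by
  simp [indepSets]

lemma ext {G H : HCGraph α} (h₁ : G.verts = H.verts) (h₂ : G.adj = H.adj) : G = H := by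
  cases G; cases H; cases h₁; cases h₂; rfl

lemma Zm_eq_Zmin_add_Zmout (G : HCGraph α) (r : α) (x : α → K) :
    G.Zm x = G.Zmin r x + G.Zmout r x :=
  (sum_filter_add_sum_filter_not _ _ _).symm

lemma ratioM_congr {G : HCGraph α} {r : α} {x y : α → K} (h : ∀ u ∈ G.verts, x u = y u) :
    G.ratioM r x = G.ratioM r y := by
  have hI : ∀ I ∈ G.indepSets, ∏ u ∈ I, x u = ∏ u ∈ I, y u := fun I hI =>
    prod_congr rfl fun u hu => h u ((mem_indepSets.1 hI).1 hu)
  simp only [ratioM, Zmin, Zmout]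
  congr 1 <;> exact sum_congr rfl fun I hI' => hI I (by simp only [mem_filter] at hI'; exact hI'.1)

lemma Zmout_div_Zm {G : HCGraph α} {r : α} {x : α → K} (h : G.Zmout r x ≠ 0) :
    G.Zmout r x / G.Zm x = (1 + G.ratioM r x)⁻¹ := by
  rw [Zm_eq_Zmin_add_Zmout G r, ratioM, one_add_div h, inv_div, add_comm]

lemma Zm_Xvar_ne_zero (G : HCGraph α) (h : α → ℕ) : G.Zm (fun u => Xvar (h u)) ≠ 0 := by
  have hZ : G.Zm (fun u => Xvar (h u)) = algebraMap (MvPolynomial ℕ ℂ) RatField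
      (∑ I ∈ G.indepSets, ∏ u ∈ I, MvPolynomial.X (h u)) := by
    simp only [Zm, Xvar, map_sum, map_prod]
  rw [hZ, map_ne_zero_iff _ (IsFractionRing.injective _ _)]
  intro h0
  have hcoeff := congrArg MvPolynomial.constantCoeff h0
  simp only [map_sum, map_prod, MvPolynomial.constantCoeff_X, prod_const, map_zero,
    zero_pow_eq, card_eq_zero] at hcoeff
  -- only the empty independent set contributes to the constant coefficient
  rw [sum_ite_eq_of_mem' _ _ _ (by simp)] at hcoeff
  exact one_ne_zero hcoeff

lemma Zm_image [DecidableEq β] {g : α → β} {A : Finset α} {f : α → α → Bool}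
    {f' : β → β → Bool} (hg : Set.InjOn g A) (hf : ∀ a ∈ A, ∀ b ∈ A, f' (g a) (g b) = f a b)
    (x : β → K) : Zm ⟨A.image g, f'⟩ x = Zm ⟨A, f⟩ (fun a => x (g a)) := by
  have hsets : indepSets ⟨A.image g, f'⟩ = (indepSets ⟨A, f⟩).image (·.image g) := by
    ext J
    simp only [mem_indepSets, mem_image, subset_image_iff]
    constructor
    · rintro ⟨⟨I, hIA, rfl⟩, hJ⟩
      refine ⟨I, ⟨hIA, fun a ha b hb => ?_⟩, rfl⟩
      rw [← hf a (hIA ha) b (hIA hb)]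
      exact hJ _ (mem_image_of_mem g ha) _ (mem_image_of_mem g hb)
    · rintro ⟨I, ⟨hIA, hI⟩, rfl⟩
      refine ⟨⟨I, hIA, rfl⟩, ?_⟩
      simp only [mem_image, forall_exists_index, and_imp, forall_apply_eq_imp_iff₂]
      exact fun a ha b hb => (hf a (hIA ha) b (hIA hb)).trans (hI a ha b hb)
  have hinj : Set.InjOn (·.image g) (indepSets ⟨A, f⟩ : Set (Finset α)) := fun I hI J hJ =>
    image_injOn_powerset_of_injOn hg (mem_powerset.2 (mem_indepSets.1 hI).1)
      (mem_powerset.2 (mem_indepSets.1 hJ).1)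
  rw [Zm, hsets, sum_image hinj, Zm]
  refine sum_congr rfl fun I hI => prod_image fun a ha b hb => hg ?_ ?_
  exacts [(mem_indepSets.1 hI).1 ha, (mem_indepSets.1 hI).1 hb]

section DecidableEq

variable [DecidableEq α]

lemma Zmout_eq_Zm_eraseVert (G : HCGraph α) (r : α) (x : α → K) :
    G.Zmout r x = (G.eraseVert r).Zm x := by
  rw [Zmout, Zm]
  congr 1
  ext I
  simp only [mem_filter, mem_indepSets, eraseVert, subset_erase]
  tauto

def eraseClosedNbhd (G : HCGraph α) (r : α) : HCGraph α :=
  ⟨(G.verts.erase r).filter fun u => G.adj r u = false ∧ G.adj u r = false, G.adj⟩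

lemma Zmin_eq_mul_Zm_eraseClosedNbhd (G : HCGraph α) {r : α} (hr : r ∈ G.verts)
    (hrr : G.adj r r = false) (x : α → K) :
    G.Zmin r x = x r * (G.eraseClosedNbhd r).Zm x := by
  rw [Zmin, Zm, mul_sum]
  refine sum_nbij' (fun I => I.erase r) (insert r) ?_ ?_ (fun I hI => ?_) (fun J hJ => ?_) ?_
  · intro I hI
    simp only [mem_filter, mem_indepSets, eraseClosedNbhd] at hI ⊢
    refine ⟨fun u hu => ?_, fun u hu w hw => hI.1.2 u (mem_of_mem_erase hu) w (mem_of_mem_erase hw)⟩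
    have hu' := mem_of_mem_erase hu
    exact mem_filter.2 ⟨mem_erase.2 ⟨ne_of_mem_erase hu, hI.1.1 hu'⟩,
      hI.1.2 r hI.2 u hu', hI.1.2 u hu' r hI.2⟩
  · intro J hJ
    simp only [mem_filter, mem_indepSets, eraseClosedNbhd] at hJ ⊢
    have hJ' : ∀ u ∈ J, u ∈ G.verts ∧ G.adj r u = false ∧ G.adj u r = false := fun u hu =>
      ⟨(mem_erase.1 (mem_filter.1 (hJ.1 hu)).1).2, (mem_filter.1 (hJ.1 hu)).2⟩
    refine ⟨⟨insert_subset hr fun u hu => (hJ' u hu).1, ?_⟩, mem_insert_self r J⟩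
    intro u hu w hw
    rcases mem_insert.1 hu with rfl | huJ <;> rcases mem_insert.1 hw with rfl | hwJ
    exacts [hrr, (hJ' w hwJ).2.1, (hJ' u huJ).2.2, hJ.2 u huJ w hwJ]
  · simp only [mem_filter] at hI
    exact insert_erase hI.2
  · simp only [mem_indepSets] at hJ
    exact erase_insert fun hr => (mem_erase.1 (mem_filter.1 (hJ.1 hr)).1).1 rfl
  · intro I hI
    simp only [mem_filter] at hI
    exact (mul_prod_erase I x hI.2).symm

lemma Zm_union {A B : Finset α} (f : α → α → Bool) (x : α → K) (hAB : Disjoint A B)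
    (hf : ∀ a ∈ A, ∀ b ∈ B, f a b = false ∧ f b a = false) :
    Zm ⟨A ∪ B, f⟩ x = Zm ⟨A, f⟩ x * Zm ⟨B, f⟩ x := by
  rw [Zm, Zm, Zm, sum_mul_sum, ← sum_product']
  refine sum_nbij' (fun I => (I ∩ A, I ∩ B)) (fun p => p.1 ∪ p.2) ?_ ?_ ?_ ?_ ?_
  · intro I hI
    simp only [mem_indepSets, mem_product] at hI ⊢
    exact ⟨⟨inter_subset_right, fun u hu w hw => hI.2 u (mem_of_mem_inter_left hu) w
      (mem_of_mem_inter_left hw)⟩, ⟨inter_subset_right, fun u hu w hw => hI.2 u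
      (mem_of_mem_inter_left hu) w (mem_of_mem_inter_left hw)⟩⟩
  · rintro ⟨I, J⟩ h
    simp only [mem_indepSets, mem_product] at h ⊢
    refine ⟨union_subset_union h.1.1 h.2.1, fun u hu w hw => ?_⟩
    rcases mem_union.1 hu with hu | hu <;> rcases mem_union.1 hw with hw | hw
    exacts [h.1.2 u hu w hw, (hf u (h.1.1 hu) w (h.2.1 hw)).1,
      (hf w (h.1.1 hw) u (h.2.1 hu)).2, h.2.2 u hu w hw]
  · intro I hI
    simp only [mem_indepSets] at hI
    rw [← inter_union_distrib_left, inter_eq_left.2 hI.1]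
  · rintro ⟨I, J⟩ h
    simp only [mem_indepSets, mem_product] at h
    have hIB : Disjoint I B := hAB.mono_left h.1.1
    have hJA : Disjoint J A := hAB.symm.mono_left h.2.1
    simp only [union_inter_distrib_right, inter_eq_left.2 h.1.1, inter_eq_left.2 h.2.1,
      disjoint_iff_inter_eq_empty.1 hIB, disjoint_iff_inter_eq_empty.1 hJA, union_empty,
      empty_union]
  · intro I hI
    simp only [mem_indepSets] at hI
    rw [← prod_union (hAB.mono inter_subset_right inter_subset_right),
      ← inter_union_distrib_left, inter_eq_left.2 hI.1]

lemma Zm_biUnion {ι : Type} [DecidableEq ι] {s : Finset ι} {P : ι → Finset α}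
    (f : α → α → Bool) (x : α → K) (hP : (s : Set ι).PairwiseDisjoint P)
    (hf : ∀ i ∈ s, ∀ j ∈ s, i ≠ j → ∀ a ∈ P i, ∀ b ∈ P j, f a b = false) :
    Zm ⟨s.biUnion P, f⟩ x = ∏ i ∈ s, Zm ⟨P i, f⟩ x := by
  induction s using Finset.induction_on with
  | empty => simp [Zm, indepSets, filter_singleton]
  | insert i s hi ih =>
    rw [biUnion_insert, prod_insert hi, Zm_union, ih (hP.subset (by simp))]
    · exact fun j hj k hk hjk => hf j (mem_insert_of_mem hj) k (mem_insert_of_mem hk) hjk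
    · exact disjoint_biUnion_right _ _ _ |>.2 fun j hj =>
        hP (mem_insert_self i s) (mem_insert_of_mem hj) (ne_of_mem_of_not_mem hj hi).symm
    · intro a ha b hb
      obtain ⟨j, hj, hbj⟩ := mem_biUnion.1 hb
      have hij : i ≠ j := (ne_of_mem_of_not_mem hj hi).symm
      exact ⟨hf i (mem_insert_self i s) j (mem_insert_of_mem hj) hij a ha b hbj,
        hf j (mem_insert_of_mem hj) i (mem_insert_self i s) hij.symm b hbj a ha⟩

lemma foldl_eraseVert_adj (l : List α) (H : HCGraph α) : (l.foldl eraseVert H).adj = H.adj := by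
  induction l generalizing H with
  | nil => rfl
  | cons a l ih => exact ih (H.eraseVert a)

lemma mem_foldl_eraseVert (l : List α) (H : HCGraph α) (x : α) :
    x ∈ (l.foldl eraseVert H).verts ↔ x ∈ H.verts ∧ x ∉ l := by
  induction l generalizing H with
  | nil => simp
  | cons a l ih => simp only [List.foldl_cons, ih, eraseVert, mem_erase, List.mem_cons]; tauto

lemma induce_verts (G : HCGraph α) : G.induce G.verts = G :=
  ext (inter_self _) rfl

lemma induce_induce (G : HCGraph α) (S S' : Finset α) :
    (G.induce S).induce S' = G.induce (S ∩ S') :=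
  ext (inter_assoc _ _ _) rfl

end DecidableEq

end HCGraph

lemma prod_range_succ_div {K : Type} [Field K] {f : ℕ → K} (hf : ∀ i, f i ≠ 0) (n : ℕ) :
    ∏ i ∈ range n, f (i + 1) / f i = f n / f 0 := by
  simpa using congrArg Units.val (prod_range_div (fun i => Units.mk0 (f i) (hf i)) n)

lemma mem_foldr_union_iff {β γ : Type} [DecidableEq γ] (F : β → Finset γ) (s : Finset γ)
    (L : List β) (x : γ) :
    x ∈ L.foldr (fun T acc => F T ∪ acc) s ↔ x ∈ s ∨ ∃ T ∈ L, x ∈ F T := by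
  induction L with
  | nil => simp
  | cons T L ih => simp only [List.foldr_cons, mem_union, ih, List.mem_cons]; grind

structure IsTailTree {α : Type} (T : HCGraph (List α)) (r : List α) : Prop where
  root_mem : r ∈ T.verts
  suffix_of_mem : ∀ w ∈ T.verts, r <:+ w
  adj_tail : ∀ x y, T.toSG.Adj x y → y = x.tail ∨ x = y.tail
  adj_tail_self : ∀ w ∈ T.verts, w ≠ r → T.toSG.Adj w w.tail

namespace IsTailTree

variable {α : Type} {T : HCGraph (List α)} {r : List α}

lemma length_le_of_walk (hT : IsTailTree T r) {a b : List α} (p : T.toSG.Walk a b) :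
    a.length ≤ p.length + b.length ∧ (a.length = p.length + b.length → b <:+ a) := by
  induction p with
  | nil => simp
  | @cons x c b h p ih =>
    rw [SimpleGraph.Walk.length_cons]
    rcases hT.adj_tail _ _ h with rfl | rfl
    · have hx : x ≠ [] := by rintro rfl; exact h.ne rfl
      have := List.length_pos_iff.2 hx
      rw [List.length_tail] at ih
      exact ⟨by omega, fun heq => (ih.2 (by omega)).trans (List.tail_suffix x)⟩
    · have hc : c ≠ [] := by rintro rfl; exact h.ne rfl
      have := List.length_pos_iff.2 hc
      rw [List.length_tail]
      exact ⟨by omega, fun heq => by omega⟩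

lemma exists_walk_of_suffix (hT : IsTailTree T r) {u : List α} (hu : u ∈ T.verts) :
    ∀ {w : List α}, w ∈ T.verts → u <:+ w →
      ∃ p : T.toSG.Walk w u, p.length = w.length - u.length := by
  suffices ∀ k, ∀ {w : List α}, w ∈ T.verts → u <:+ w → w.length = u.length + k →
      ∃ p : T.toSG.Walk w u, p.length = k from
    fun {w} hw h => this _ hw h (by have := h.length_le; omega)
  intro k
  induction k with
  | zero =>
    intro w _ h hlen
    obtain rfl := h.eq_of_length (by omega)
    exact ⟨.nil, rfl⟩
  | succ k ih =>
    intro w hw h hlen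
    have hwr : w ≠ r := by
      rintro rfl
      have := (hT.suffix_of_mem u hu).length_le
      omega
    have hadj := hT.adj_tail_self w hw hwr
    have htail : u <:+ w.tail := by
      cases w with
      | nil => simp at hlen
      | cons x t => exact (List.suffix_cons_iff.1 h).resolve_left (by rintro rfl; simp at hlen)
    obtain ⟨p, hp⟩ := ih hadj.2.2.1 htail (by rw [List.length_tail]; omega)
    exact ⟨.cons hadj p, by rw [SimpleGraph.Walk.length_cons, hp]⟩

lemma dist_of_suffix (hT : IsTailTree T r) {u w : List α} (hu : u ∈ T.verts)
    (hw : w ∈ T.verts) (h : u <:+ w) :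
    T.toSG.Reachable w u ∧ T.toSG.dist w u = w.length - u.length := by
  obtain ⟨p, hp⟩ := hT.exists_walk_of_suffix hu hw h
  obtain ⟨q, hq⟩ := p.reachable.exists_walk_length_eq_dist
  have := (hT.length_le_of_walk q).1
  have := SimpleGraph.dist_le p
  exact ⟨p.reachable, by omega⟩

lemma mem_subtreeAt_iff (hT : IsTailTree T r) {u w : List α} (hu : u ∈ T.verts) :
    w ∈ (subtreeAt T r u).verts ↔ w ∈ T.verts ∧ u <:+ w := by
  simp only [subtreeAt, mem_filter]
  have hur := (hT.dist_of_suffix hT.root_mem hu (hT.suffix_of_mem u hu)).2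
  have hru := (hT.suffix_of_mem u hu).length_le
  refine ⟨fun ⟨hw, hreach, hd⟩ => ⟨hw, ?_⟩, fun ⟨hw, h⟩ => ⟨hw, (hT.dist_of_suffix hu hw h).1, ?_⟩⟩
  all_goals
    have hwr := (hT.dist_of_suffix hT.root_mem hw (hT.suffix_of_mem w hw)).2
    have hrw := (hT.suffix_of_mem w hw).length_le
  · obtain ⟨q, hq⟩ := hreach.exists_walk_length_eq_dist
    exact (hT.length_le_of_walk q).2 (by omega)
  · have := h.length_le
    have hwu := (hT.dist_of_suffix hu hw h).2
    omega

lemma subtreeAt_root (hT : IsTailTree T r) : subtreeAt T r r = T :=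
  HCGraph.ext (Finset.ext fun w => by
    rw [hT.mem_subtreeAt_iff hT.root_mem]
    exact and_iff_left_of_imp (hT.suffix_of_mem w)) rfl

end IsTailTree

namespace RootedIso

variable {α β γ : Type}

lemma refl (G : HCGraph α) (a : α) : RootedIso G a G a :=
  ⟨id, rfl, Set.bijOn_id _, fun _ _ _ _ => Iff.rfl⟩

lemma trans {A : HCGraph α} {B : HCGraph β} {C : HCGraph γ} {a : α} {b : β} {c : γ}
    (h₁ : RootedIso A a B b) (h₂ : RootedIso B b C c) : RootedIso A a C c := by
  obtain ⟨f, hfa, hf, hfadj⟩ := h₁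
  obtain ⟨g, hgb, hg, hgadj⟩ := h₂
  refine ⟨g ∘ f, by simp [hfa, hgb], hg.comp hf, fun x hx y hy => ?_⟩
  exact (hfadj x hx y hy).trans (hgadj _ (hf.mapsTo hx) _ (hf.mapsTo hy))

lemma of_image [DecidableEq α] {G : HCGraph α} {H : HCGraph β} {f : α → β} {g : β → α}
    (hfg : ∀ y, f (g y) = y) (hverts : G.verts = H.verts.image g)
    (hadj : ∀ x ∈ H.verts, ∀ y ∈ H.verts, G.adj (g x) (g y) = H.adj x y) (b : β) :
    RootedIso G (g b) H b := by
  have hg : Function.Injective g := Function.LeftInverse.injective hfg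
  refine ⟨f, hfg b, ⟨?_, ?_, fun y hy => ⟨g y, ?_, hfg y⟩⟩, ?_⟩
  · intro x hx
    obtain ⟨y, hy, rfl⟩ := mem_image.1 (hverts ▸ hx)
    simpa [hfg] using hy
  · intro x hx x' hx' h
    obtain ⟨y, -, rfl⟩ := mem_image.1 (hverts ▸ hx)
    obtain ⟨y', -, rfl⟩ := mem_image.1 (hverts ▸ hx')
    rw [hfg, hfg] at h
    rw [h]
  · simpa [hverts] using mem_image_of_mem g hy
  · intro x hx x' hx'
    obtain ⟨y, hy, rfl⟩ := mem_image.1 (hverts ▸ hx)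
    obtain ⟨y', hy', rfl⟩ := mem_image.1 (hverts ▸ hx')
    simp only [HCGraph.toSG, hfg, hg.ne_iff, hadj y hy y' hy', hadj y' hy' y hy, hx, hx', hy,
      hy', true_and]

end RootedIso

/-- Indexed from `0`: `branchGraph G v i = G - {v, v₀, …, vᵢ₋₁}` where `vⱼ = branchRoot G v j`. -/
def branchGraph (G : HCGraph ℕ) (v i : ℕ) : HCGraph ℕ :=
  ((nbrList G v).take i).foldl HCGraph.eraseVert (G.eraseVert v)

def branchRoot (G : HCGraph ℕ) (v i : ℕ) : ℕ := (nbrList G v).getD i 0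

def branchTree (n : ℕ) (G : HCGraph ℕ) (v i : ℕ) : HCGraph (List ℕ) :=
  TSAWAux n (branchGraph G v i) (branchRoot G v i)

lemma verts_TSAWAux_succ (n : ℕ) (G : HCGraph ℕ) (v : ℕ) :
    (TSAWAux (n + 1) G v).verts = insert [v] ((range (nbrList G v).length).biUnion
      fun i => (branchTree n G v i).verts.image (· ++ [v])) := by
  ext x
  simp only [TSAWAux, mem_foldr_union_iff, mem_insert, mem_biUnion, List.mem_map, mem_range,
    List.mem_range, mem_singleton, branchTree, branchGraph, branchRoot]
  grind

lemma adj_TSAWAux_succ {n : ℕ} {G : HCGraph ℕ} {v : ℕ} {x y : List ℕ} :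
    (TSAWAux (n + 1) G v).adj x y = true ↔
      (x = [v] ∧ ∃ u ∈ nbrList G v, y = [u, v]) ∨
      (y = [v] ∧ ∃ u ∈ nbrList G v, x = [u, v]) ∨
      ∃ i < (nbrList G v).length, x.dropLast ∈ (branchTree n G v i).verts ∧
        y.dropLast ∈ (branchTree n G v i).verts ∧
        (branchTree n G v i).adj x.dropLast y.dropLast = true := by
  simp only [TSAWAux, Bool.or_eq_true, Bool.and_eq_true, List.any_eq_true, decide_eq_true_eq,
    List.mem_map, List.mem_range, branchTree, branchGraph, branchRoot]
  grind

section TSAWAux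

variable {n : ℕ} {G : HCGraph ℕ} {v i j : ℕ}

lemma mem_TSAWAux_succ {x : List ℕ} : x ∈ (TSAWAux (n + 1) G v).verts ↔
    x = [v] ∨ ∃ i < (nbrList G v).length, ∃ a ∈ (branchTree n G v i).verts, x = a ++ [v] := by
  simp only [verts_TSAWAux_succ, mem_insert, mem_biUnion, mem_range, mem_image]
  grind

lemma append_mem_TSAWAux_succ (hi : i < (nbrList G v).length) {a : List ℕ}
    (ha : a ∈ (branchTree n G v i).verts) : a ++ [v] ∈ (TSAWAux (n + 1) G v).verts :=
  mem_TSAWAux_succ.2 (Or.inr ⟨i, hi, a, ha, rfl⟩)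

lemma root_mem_TSAWAux (n : ℕ) (G : HCGraph ℕ) (v : ℕ) : [v] ∈ (TSAWAux n G v).verts := by
  cases n with
  | zero => simp [TSAWAux]
  | succ n => exact mem_TSAWAux_succ.2 (Or.inl rfl)

lemma getLast?_of_mem_TSAWAux : ∀ {n : ℕ} {G : HCGraph ℕ} {v : ℕ} {w : List ℕ},
    w ∈ (TSAWAux n G v).verts → w.getLast? = some v
  | 0, _, _, _, hw => by simp_all [TSAWAux]
  | _ + 1, _, _, _, hw => by
    rcases mem_TSAWAux_succ.1 hw with rfl | ⟨_, _, _, _, rfl⟩ <;> simp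

lemma ne_nil_of_mem_TSAWAux {w : List ℕ} (hw : w ∈ (TSAWAux n G v).verts) : w ≠ [] := by
  rintro rfl
  simpa using getLast?_of_mem_TSAWAux hw

lemma mem_nbrList {u : ℕ} : u ∈ nbrList G v ↔ u ∈ G.verts ∧ G.toSG.Adj v u := by
  rw [nbrList, mem_sort, HCGraph.nbr, mem_filter]

lemma branchRoot_mem_nbrList (hi : i < (nbrList G v).length) :
    branchRoot G v i ∈ nbrList G v := by
  rw [branchRoot, List.getD_eq_getElem _ 0 hi]
  exact List.getElem_mem hi

lemma eq_of_branchRoot_eq (hi : i < (nbrList G v).length) (hj : j < (nbrList G v).length)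
    (h : branchRoot G v i = branchRoot G v j) : i = j := by
  rw [branchRoot, branchRoot, List.getD_eq_getElem _ 0 hi, List.getD_eq_getElem _ 0 hj] at h
  exact (sort_nodup _ _).getElem_inj_iff.1 h

lemma eq_of_mem_branchTree (hi : i < (nbrList G v).length) (hj : j < (nbrList G v).length)
    {a b : List ℕ} (ha : a ∈ (branchTree n G v i).verts) (hb : b ∈ (branchTree n G v j).verts)
    (hab : a <:+ b) : i = j := by
  obtain ⟨t, rfl⟩ := hab
  have hlast := getLast?_of_mem_TSAWAux hb
  rw [List.getLast?_append, getLast?_of_mem_TSAWAux ha] at hlast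
  exact eq_of_branchRoot_eq hi hj (by simpa using hlast)

lemma append_ne_root_of_mem_branchTree {a : List ℕ} (ha : a ∈ (branchTree n G v i).verts) :
    a ++ [v] ≠ [v] := by
  simpa using ne_nil_of_mem_TSAWAux ha

lemma adj_TSAWAux_succ_append (hi : i < (nbrList G v).length) {a b : List ℕ}
    (ha : a ∈ (branchTree n G v i).verts) (hb : b ∈ (branchTree n G v i).verts) :
    (TSAWAux (n + 1) G v).adj (a ++ [v]) (b ++ [v]) = (branchTree n G v i).adj a b := by
  rw [Bool.eq_iff_iff, adj_TSAWAux_succ]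
  constructor
  · rintro (⟨hx, -⟩ | ⟨hy, -⟩ | ⟨k, hk, hak, -, hadj⟩)
    · exact absurd hx (append_ne_root_of_mem_branchTree ha)
    · exact absurd hy (append_ne_root_of_mem_branchTree hb)
    · rw [List.dropLast_concat] at hak hadj
      rwa [eq_of_mem_branchTree hk hi hak ha (List.suffix_refl _), List.dropLast_concat] at hadj
  · intro h
    exact Or.inr (Or.inr ⟨i, hi, by simpa, by simpa, by simpa⟩)

lemma adj_TSAWAux_succ_append_of_ne (hi : i < (nbrList G v).length) (hj : j < (nbrList G v).length)
    (hij : i ≠ j) {a b : List ℕ} (ha : a ∈ (branchTree n G v i).verts)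
    (hb : b ∈ (branchTree n G v j).verts) :
    (TSAWAux (n + 1) G v).adj (a ++ [v]) (b ++ [v]) = false := by
  rw [Bool.eq_false_iff, ne_eq, adj_TSAWAux_succ]
  rintro (⟨hx, -⟩ | ⟨hy, -⟩ | ⟨k, hk, hak, hbk, -⟩)
  · exact append_ne_root_of_mem_branchTree ha hx
  · exact append_ne_root_of_mem_branchTree hb hy
  · rw [List.dropLast_concat] at hak hbk
    exact hij ((eq_of_mem_branchTree hk hi hak ha (List.suffix_refl _)).symm.trans
      (eq_of_mem_branchTree hk hj hbk hb (List.suffix_refl _)))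

lemma adj_TSAWAux_succ_root : (TSAWAux (n + 1) G v).adj [v] [v] = false := by
  rw [Bool.eq_false_iff, ne_eq, adj_TSAWAux_succ]
  rintro (⟨-, u, -, h⟩ | ⟨-, u, -, h⟩ | ⟨k, -, hk, -, -⟩)
  · simp at h
  · simp at h
  · exact ne_nil_of_mem_TSAWAux hk rfl

lemma adj_TSAWAux_succ_root_append_iff (hi : i < (nbrList G v).length) {a : List ℕ}
    (ha : a ∈ (branchTree n G v i).verts) :
    ((TSAWAux (n + 1) G v).adj [v] (a ++ [v]) = true ∨
      (TSAWAux (n + 1) G v).adj (a ++ [v]) [v] = true) ↔ a = [branchRoot G v i] := by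
  have hroot : ∀ u, a ++ [v] = [u, v] → a = [branchRoot G v i] := by
    intro u hu
    obtain rfl : a = [u] := (List.append_left_inj [v]).1 (hu : a ++ [v] = [u] ++ [v])
    simpa [eq_comm] using getLast?_of_mem_TSAWAux ha
  simp only [adj_TSAWAux_succ, List.dropLast_singleton]
  constructor
  · rintro ((⟨-, u, -, h⟩ | ⟨h, -⟩ | ⟨k, -, hk, -, -⟩) | (⟨h, -⟩ | ⟨-, u, -, h⟩ | ⟨k, -, -, hk, -⟩))
    · exact hroot u h
    · exact absurd h (append_ne_root_of_mem_branchTree ha)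
    · exact absurd rfl (ne_nil_of_mem_TSAWAux hk)
    · exact absurd h (append_ne_root_of_mem_branchTree ha)
    · exact hroot u h
    · exact absurd rfl (ne_nil_of_mem_TSAWAux hk)
  · rintro rfl
    exact Or.inl (Or.inl ⟨trivial, _, branchRoot_mem_nbrList hi, rfl⟩)

lemma branchGraph_adj : (branchGraph G v i).adj = G.adj :=
  HCGraph.foldl_eraseVert_adj _ _

lemma mem_branchGraph {x : ℕ} :
    x ∈ (branchGraph G v i).verts ↔ (x ∈ G.verts ∧ x ≠ v) ∧ x ∉ (nbrList G v).take i := by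
  rw [branchGraph, HCGraph.mem_foldl_eraseVert, HCGraph.eraseVert, mem_erase, and_comm (a := x ≠ v)]

lemma branchGraph_succ (hi : i < (nbrList G v).length) :
    branchGraph G v (i + 1) = (branchGraph G v i).eraseVert (branchRoot G v i) := by
  rw [branchGraph, branchGraph, List.take_add_one, List.getElem?_eq_getElem hi, Option.toList_some,
    List.foldl_append, branchRoot, List.getD_eq_getElem _ 0 hi]
  rfl

lemma eraseClosedNbhd_eq_branchGraph (hv : v ∈ G.verts) :
    G.eraseClosedNbhd v = branchGraph G v (nbrList G v).length := by
  refine HCGraph.ext ?_ (branchGraph_adj (G := G)).symm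
  ext x
  simp only [HCGraph.eraseClosedNbhd, mem_filter, mem_erase, mem_branchGraph, List.take_length,
    mem_nbrList, HCGraph.toSG]
  grind

lemma branchRoot_mem_branchGraph (hi : i < (nbrList G v).length) :
    branchRoot G v i ∈ (branchGraph G v i).verts := by
  have hmem := branchRoot_mem_nbrList hi
  refine mem_branchGraph.2 ⟨⟨(mem_nbrList.1 hmem).1, (mem_nbrList.1 hmem).2.ne'⟩, fun h => ?_⟩
  obtain ⟨j, hj, hji⟩ := List.getElem_of_mem h
  rw [List.getElem_take] at hji
  have hj' : j < i := (by simpa using hj : j < i ∧ _).1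
  exact hj'.ne (eq_of_branchRoot_eq (by omega) hi
    (by rw [branchRoot, List.getD_eq_getElem _ 0 (by omega), hji]))

lemma card_branchGraph_lt (hv : v ∈ G.verts) : (branchGraph G v i).verts.card < G.verts.card :=
  card_lt_card ⟨fun _ hx => (mem_branchGraph.1 hx).1.1,
    fun h => (mem_branchGraph.1 (h hv)).1.2 rfl⟩

lemma headD_append_of_mem_branchTree {n : ℕ} {a : List ℕ}
    (ha : a ∈ (branchTree n G v i).verts) : (a ++ [v]).headD 0 = a.headD 0 := by
  obtain ⟨b, t, rfl⟩ := List.exists_cons_of_ne_nil (ne_nil_of_mem_TSAWAux ha)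
  rfl

end TSAWAux

lemma headD_mem_of_mem_TSAWAux : ∀ {n : ℕ} {G : HCGraph ℕ} {v : ℕ} {w : List ℕ},
    v ∈ G.verts → w ∈ (TSAWAux n G v).verts → w.headD 0 ∈ G.verts
  | 0, _, _, _, hv, hw => by simp_all [TSAWAux]
  | _ + 1, _, _, _, hv, hw => by
    obtain rfl | ⟨i, hi, a, ha, rfl⟩ := mem_TSAWAux_succ.1 hw
    · exact hv
    · rw [headD_append_of_mem_branchTree ha]
      exact (mem_branchGraph.1 (headD_mem_of_mem_TSAWAux (branchRoot_mem_branchGraph hi) ha)).1.1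

lemma branchGraph_eq_induce (G : HCGraph ℕ) (v i : ℕ) :
    branchGraph G v i = G.induce (branchGraph G v i).verts :=
  HCGraph.ext (inter_eq_right.2 fun _ hx => (mem_branchGraph.1 hx).1.1).symm branchGraph_adj

section TreeRecursion

variable {K : Type} [Field K] {n : ℕ} {G : HCGraph ℕ} {v : ℕ}

lemma Zm_TSAWAux_branches {S : ℕ → Finset (List ℕ)}
    (hS : ∀ i < (nbrList G v).length, S i ⊆ (branchTree n G v i).verts) (x : List ℕ → K) :
    HCGraph.Zm ⟨(range (nbrList G v).length).biUnion (fun i => (S i).image (· ++ [v])),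
        (TSAWAux (n + 1) G v).adj⟩ x =
      ∏ i ∈ range (nbrList G v).length,
        HCGraph.Zm ⟨S i, (branchTree n G v i).adj⟩ (fun a => x (a ++ [v])) := by
  rw [HCGraph.Zm_biUnion]
  · refine prod_congr rfl fun i hi => HCGraph.Zm_image (fun a _ b _ h => ?_) ?_ x
    · exact (List.append_left_inj [v]).1 h
    · exact fun a ha b hb => adj_TSAWAux_succ_append (mem_range.1 hi) (hS i (mem_range.1 hi) ha)
        (hS i (mem_range.1 hi) hb)
  · intro i hi j hj hij
    simp only [Function.onFun, disjoint_left, mem_image]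
    rintro _ ⟨a, ha, rfl⟩ ⟨b, hb, hab⟩
    obtain rfl := (List.append_left_inj [v]).1 hab
    exact hij (eq_of_mem_branchTree (mem_range.1 hi) (mem_range.1 hj)
      (hS i (mem_range.1 hi) ha) (hS j (mem_range.1 hj) hb) (List.suffix_refl _))
  · intro i hi j hj hij x hx y hy
    obtain ⟨a, ha, rfl⟩ := mem_image.1 hx
    obtain ⟨b, hb, rfl⟩ := mem_image.1 hy
    exact adj_TSAWAux_succ_append_of_ne (mem_range.1 hi) (mem_range.1 hj) hij
      (hS i (mem_range.1 hi) ha) (hS j (mem_range.1 hj) hb)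

lemma Zmout_TSAWAux_succ (x : List ℕ → K) :
    (TSAWAux (n + 1) G v).Zmout [v] x =
      ∏ i ∈ range (nbrList G v).length, (branchTree n G v i).Zm (fun a => x (a ++ [v])) := by
  rw [HCGraph.Zmout_eq_Zm_eraseVert, ← Zm_TSAWAux_branches (fun _ _ => subset_rfl)]
  congr 1
  refine HCGraph.ext ?_ rfl
  rw [HCGraph.eraseVert, verts_TSAWAux_succ, erase_insert]
  simp only [mem_biUnion, mem_image, not_exists, not_and]
  exact fun i _ a ha => append_ne_root_of_mem_branchTree ha

lemma Zmin_TSAWAux_succ (x : List ℕ → K) :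
    (TSAWAux (n + 1) G v).Zmin [v] x = x [v] * ∏ i ∈ range (nbrList G v).length,
      (branchTree n G v i).Zmout [branchRoot G v i] (fun a => x (a ++ [v])) := by
  rw [HCGraph.Zmin_eq_mul_Zm_eraseClosedNbhd _ (root_mem_TSAWAux _ G v) adj_TSAWAux_succ_root]
  simp only [HCGraph.Zmout_eq_Zm_eraseVert, HCGraph.eraseVert]
  rw [← Zm_TSAWAux_branches (S := fun i => (branchTree n G v i).verts.erase [branchRoot G v i])
    (fun _ _ => erase_subset _ _)]
  congr 2
  refine HCGraph.ext ?_ rfl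
  ext w
  simp only [HCGraph.eraseClosedNbhd, mem_filter, mem_erase, mem_biUnion, mem_range, mem_image]
  constructor
  · rintro ⟨⟨hne, hw⟩, hadj⟩
    obtain rfl | ⟨i, hi, a, ha, rfl⟩ := mem_TSAWAux_succ.1 hw
    · exact absurd rfl hne
    refine ⟨i, hi, a, ⟨fun h => ?_, ha⟩, rfl⟩
    simpa [hadj] using (adj_TSAWAux_succ_root_append_iff hi ha).2 h
  · rintro ⟨i, hi, a, ⟨hroot, ha⟩, rfl⟩
    refine ⟨⟨append_ne_root_of_mem_branchTree ha, append_mem_TSAWAux_succ hi ha⟩, ?_⟩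
    simpa [not_or] using mt (adj_TSAWAux_succ_root_append_iff hi ha).1 hroot

lemma ratioM_TSAWAux_succ {x : List ℕ → K} (hx : ∀ i < (nbrList G v).length,
      (branchTree n G v i).Zmout [branchRoot G v i] (fun a => x (a ++ [v])) ≠ 0) :
    (TSAWAux (n + 1) G v).ratioM [v] x = x [v] * ∏ i ∈ range (nbrList G v).length,
      (1 + (branchTree n G v i).ratioM [branchRoot G v i] (fun a => x (a ++ [v])))⁻¹ := by
  rw [HCGraph.ratioM, Zmin_TSAWAux_succ, Zmout_TSAWAux_succ, mul_div_assoc, ← prod_div_distrib]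
  exact congrArg _ (prod_congr rfl fun i hi => HCGraph.Zmout_div_Zm (hx i (mem_range.1 hi)))

end TreeRecursion

section GraphRecursion

variable {K : Type} [Field K] {G : HCGraph ℕ} {v : ℕ}

lemma ratioM_eq_mul_prod_branchGraph (hv : v ∈ G.verts) (hvv : G.adj v v = false) {x : ℕ → K}
    (hx : ∀ i, (branchGraph G v i).Zm x ≠ 0) :
    G.ratioM v x = x v * ∏ i ∈ range (nbrList G v).length,
      (1 + (branchGraph G v i).ratioM (branchRoot G v i) x)⁻¹ := by
  rw [HCGraph.ratioM, HCGraph.Zmin_eq_mul_Zm_eraseClosedNbhd _ hv hvv,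
    HCGraph.Zmout_eq_Zm_eraseVert, eraseClosedNbhd_eq_branchGraph hv, mul_div_assoc,
    show G.eraseVert v = branchGraph G v 0 from rfl, ← prod_range_succ_div hx]
  refine congrArg _ (prod_congr rfl fun i hi => ?_)
  have hsucc := branchGraph_succ (G := G) (mem_range.1 hi)
  rw [hsucc, ← HCGraph.Zmout_eq_Zm_eraseVert,
    HCGraph.Zmout_div_Zm (by rw [HCGraph.Zmout_eq_Zm_eraseVert, ← hsucc]; exact hx _)]

end GraphRecursion

lemma ratioM_TSAWAux_eq_ratioM : ∀ {n : ℕ} {G : HCGraph ℕ} {v : ℕ}, (∀ u, G.adj u u = false) →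
    v ∈ G.verts → G.verts.card ≤ n →
    (TSAWAux n G v).ratioM [v] (fun w => Xvar (w.headD 0)) = G.ratioM v Xvar
  | 0, _, v, _, hv, hn => absurd (card_pos.2 ⟨v, hv⟩) (by omega)
  | n + 1, G, v, hloop, hv, hn => by
    rw [ratioM_TSAWAux_succ, ratioM_eq_mul_prod_branchGraph (x := Xvar) hv (hloop v)
      fun i => HCGraph.Zm_Xvar_ne_zero _ id]
    · refine congrArg _ (prod_congr rfl fun i hi => ?_)
      rw [mem_range] at hi
      rw [HCGraph.ratioM_congr fun a ha => by rw [headD_append_of_mem_branchTree ha]]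
      rw [branchTree, ratioM_TSAWAux_eq_ratioM (by rwa [branchGraph_adj])
        (branchRoot_mem_branchGraph hi) (by have := card_branchGraph_lt hv (i := i); omega)]
    · intro i _
      rw [HCGraph.Zmout_eq_Zm_eraseVert]
      exact HCGraph.Zm_Xvar_ne_zero _ _

lemma adj_TSAWAux_eq_tail : ∀ {n : ℕ} {G : HCGraph ℕ} {v : ℕ} {x y : List ℕ},
    x ∈ (TSAWAux n G v).verts → y ∈ (TSAWAux n G v).verts →
    (TSAWAux n G v).adj x y = true → y = x.tail ∨ x = y.tail
  | 0, _, _, _, _, _, _, h => by simp [TSAWAux] at h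
  | _ + 1, _, _, _, _, hx, hy, h => by
    rcases adj_TSAWAux_succ.1 h with ⟨rfl, u, -, rfl⟩ | ⟨rfl, u, -, rfl⟩ | ⟨i, hi, hxi, hyi, h⟩
    · exact Or.inr rfl
    · exact Or.inl rfl
    obtain ⟨a, rfl⟩ := List.getLast?_eq_some_iff.1 (getLast?_of_mem_TSAWAux hx)
    obtain ⟨b, rfl⟩ := List.getLast?_eq_some_iff.1 (getLast?_of_mem_TSAWAux hy)
    simp only [List.dropLast_concat] at hxi hyi h
    rw [List.tail_append_of_ne_nil (ne_nil_of_mem_TSAWAux hxi),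
      List.tail_append_of_ne_nil (ne_nil_of_mem_TSAWAux hyi)]
    rcases adj_TSAWAux_eq_tail hxi hyi h with rfl | rfl
    · exact Or.inl rfl
    · exact Or.inr rfl

lemma tail_adj_of_mem_TSAWAux : ∀ {n : ℕ} {G : HCGraph ℕ} {v : ℕ} {w : List ℕ},
    w ∈ (TSAWAux n G v).verts → w ≠ [v] →
    w.tail ∈ (TSAWAux n G v).verts ∧ (TSAWAux n G v).adj w w.tail = true
  | 0, _, _, _, hw, hne => by simp_all [TSAWAux]
  | _ + 1, G, v, _, hw, hne => by
    obtain rfl | ⟨i, hi, a, ha, rfl⟩ := mem_TSAWAux_succ.1 hw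
    · exact absurd rfl hne
    by_cases hroot : a = [branchRoot G v i]
    · subst hroot
      exact ⟨root_mem_TSAWAux _ G v,
        adj_TSAWAux_succ.2 (Or.inr (Or.inl ⟨rfl, _, branchRoot_mem_nbrList hi, rfl⟩))⟩
    obtain ⟨hta, hadj⟩ := tail_adj_of_mem_TSAWAux ha hroot
    rw [List.tail_append_of_ne_nil (ne_nil_of_mem_TSAWAux ha)]
    exact ⟨append_mem_TSAWAux_succ hi hta, by rwa [adj_TSAWAux_succ_append hi ha hta]⟩

lemma isTailTree_TSAWAux (n : ℕ) (G : HCGraph ℕ) (v : ℕ) : IsTailTree (TSAWAux n G v) [v] where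
  root_mem := root_mem_TSAWAux n G v
  suffix_of_mem w hw := by
    obtain ⟨a, rfl⟩ := List.getLast?_eq_some_iff.1 (getLast?_of_mem_TSAWAux hw)
    exact List.suffix_append a [v]
  adj_tail x y h := by
    rcases h.2.2.2 with h' | h'
    · exact adj_TSAWAux_eq_tail h.2.1 h.2.2.1 h'
    · exact (adj_TSAWAux_eq_tail h.2.2.1 h.2.1 h').symm
  adj_tail_self w hw hne := by
    obtain ⟨htail, hadj⟩ := tail_adj_of_mem_TSAWAux hw hne
    have := List.length_pos_iff.2 (ne_nil_of_mem_TSAWAux hw)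
    refine ⟨fun h => ?_, hw, htail, Or.inl hadj⟩
    have := congrArg List.length h
    rw [List.length_tail] at this
    omega

section Stabilization

variable {G : HCGraph ℕ} {v : ℕ}

lemma TSAWAux_succ_congr {n m : ℕ}
    (h : ∀ i < (nbrList G v).length, branchTree n G v i = branchTree m G v i) :
    TSAWAux (n + 1) G v = TSAWAux (m + 1) G v := by
  refine HCGraph.ext ?_ ?_
  · rw [verts_TSAWAux_succ, verts_TSAWAux_succ]
    exact congrArg _ (biUnion_congr rfl fun i hi => by rw [h i (mem_range.1 hi)])
  · funext x y
    rw [Bool.eq_iff_iff, adj_TSAWAux_succ, adj_TSAWAux_succ]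
    refine or_congr_right (or_congr_right (exists_congr fun i => and_congr_right fun hi => ?_))
    rw [h i hi]

lemma TSAWAux_succ_of_nbrList_eq_nil {n : ℕ} (h : nbrList G v = []) :
    TSAWAux (n + 1) G v = TSAWAux 0 G v := by
  simp [TSAWAux, h]

lemma TSAWAux_succ_of_card_le : ∀ {n : ℕ} {G : HCGraph ℕ} {v : ℕ}, G.verts.card ≤ n →
    TSAWAux (n + 1) G v = TSAWAux n G v
  | 0, G, v, hn => TSAWAux_succ_of_nbrList_eq_nil (List.eq_nil_iff_forall_not_mem.2 fun u hu =>
      by simp_all [mem_nbrList, card_eq_zero])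
  | n + 1, G, v, hn => TSAWAux_succ_congr fun i hi => by
      have hv := (mem_nbrList.1 (branchRoot_mem_nbrList hi)).2.2.1
      have := card_branchGraph_lt hv (i := i)
      exact TSAWAux_succ_of_card_le (by omega)

lemma TSAWAux_eq_TSAW {n : ℕ} (hn : G.verts.card ≤ n) : TSAWAux n G v = TSAW G v := by
  induction n, hn using Nat.le_induction with
  | base => rfl
  | succ n hn ih => rw [TSAWAux_succ_of_card_le hn, ih]

end Stabilization

section Subtrees

variable {n : ℕ} {G : HCGraph ℕ} {v i : ℕ}

lemma verts_subtreeAt_append (hi : i < (nbrList G v).length) {a : List ℕ}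
    (ha : a ∈ (branchTree n G v i).verts) :
    (subtreeAt (TSAWAux (n + 1) G v) [v] (a ++ [v])).verts =
      (subtreeAt (branchTree n G v i) [branchRoot G v i] a).verts.image (· ++ [v]) := by
  ext w
  rw [(isTailTree_TSAWAux _ G v).mem_subtreeAt_iff (append_mem_TSAWAux_succ hi ha), mem_image]
  simp only [branchTree, (isTailTree_TSAWAux _ _ _).mem_subtreeAt_iff ha]
  constructor
  · rintro ⟨hw, hsuf⟩
    obtain rfl | ⟨j, hj, b, hb, rfl⟩ := mem_TSAWAux_succ.1 hw
    · have hlen := hsuf.length_le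
      have := List.length_pos_iff.2 (ne_nil_of_mem_TSAWAux ha)
      simp only [List.length_append, List.length_singleton] at hlen
      omega
    rw [List.suffix_append_self_iff] at hsuf
    obtain rfl := eq_of_mem_branchTree hi hj ha hb hsuf
    exact ⟨b, ⟨hb, hsuf⟩, rfl⟩
  · rintro ⟨b, ⟨hb, hsuf⟩, rfl⟩
    exact ⟨append_mem_TSAWAux_succ hi hb, List.suffix_append_self_iff.2 hsuf⟩

lemma rootedIso_subtreeAt_append (hi : i < (nbrList G v).length) {a : List ℕ}
    (ha : a ∈ (branchTree n G v i).verts) :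
    RootedIso (subtreeAt (TSAWAux (n + 1) G v) [v] (a ++ [v])) (a ++ [v])
      (subtreeAt (branchTree n G v i) [branchRoot G v i] a) a :=
  RootedIso.of_image (f := List.dropLast) (fun _ => List.dropLast_concat)
    (verts_subtreeAt_append hi ha)
    (fun _ hx _ hy => adj_TSAWAux_succ_append hi (filter_subset _ _ hx) (filter_subset _ _ hy)) a

end Subtrees

lemma exists_rootedIso_subtreeAt : ∀ {n : ℕ} {G : HCGraph ℕ} {v : ℕ}, v ∈ G.verts →
    G.verts.card ≤ n → ∀ u ∈ (TSAWAux n G v).verts, ∃ (S : Finset ℕ) (r : ℕ),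
      r ∈ (G.induce S).verts ∧
      RootedIso (subtreeAt (TSAWAux n G v) [v] u) u (TSAW (G.induce S) r) [r]
  | 0, _, v, hv, hn, _, _ => absurd (card_pos.2 ⟨v, hv⟩) (by omega)
  | n + 1, G, v, hv, hn, u, hu => by
    obtain rfl | ⟨i, hi, a, ha, rfl⟩ := mem_TSAWAux_succ.1 hu
    · refine ⟨G.verts, v, by rwa [HCGraph.induce_verts], ?_⟩
      rw [(isTailTree_TSAWAux _ G v).subtreeAt_root, HCGraph.induce_verts, TSAWAux_eq_TSAW hn]
      exact .refl _ _
    · have := card_branchGraph_lt hv (i := i)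
      obtain ⟨S, r, hr, hiso⟩ :=
        exists_rootedIso_subtreeAt (branchRoot_mem_branchGraph hi) (by omega) a ha
      refine ⟨(branchGraph G v i).verts ∩ S, r, ?_, ?_⟩ <;>
        rw [← HCGraph.induce_induce, ← branchGraph_eq_induce]
      exacts [hr, (rootedIso_subtreeAt_append hi ha).trans hiso]

/-- **Lemma 2.1.** For a finite graph `G` with vertex `v` and a vector of
variables `(λ_u)_{u ∈ V}` there is an assignment of the variables `λ_u` to the vertices of
the self-avoiding walk tree `T_SAW(G,v)` under which the occupation ratio of the tree at
its root equals the occupation ratio of `G` at `v`.  Moreover, every subtree of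
`T_SAW(G,v)` hanging below one of its vertices is (as a rooted graph) the self-avoiding
walk tree of an induced subgraph of `G`. -/
theorem ratio_TSAW_eq_ratio (G : HCGraph ℕ) (hG : G.IsSimple) (v : ℕ) (hv : v ∈ G.verts) :
    (∃ tl : List ℕ → RatField,
      (∀ w ∈ (TSAW G v).verts, ∃ u ∈ G.verts, tl w = Xvar u) ∧
      HCGraph.ratioM (TSAW G v) [v] tl = HCGraph.ratioM G v Xvar) ∧
    (∀ u ∈ (TSAW G v).verts, ∃ (S : Finset ℕ) (r : ℕ), r ∈ (G.induce S).verts ∧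
      RootedIso (subtreeAt (TSAW G v) [v] u) u (TSAW (G.induce S) r) [r]) :=
  ⟨⟨fun w => Xvar (w.headD 0), fun _ hw => ⟨_, headD_mem_of_mem_TSAWAux hv hw, rfl⟩,
    ratioM_TSAWAux_eq_ratioM hG.2 hv le_rfl⟩, exists_rootedIso_subtreeAt hv le_rfl⟩

end
end

section
/- Let λ > 0. Given any sequence (λ_n)_{n≥1} of numbers in (0,λ], there exists a unique starting value w_0 ∈ ℂ for which the orbit (w_n) defined by w_n = f_{λ_n}(w_{n−1}) = λ_n/(1+w_{n−1}) is contained in the open left half-plane {z : Re(z) < 0}. Moreover, this orbit (w_n)_{n≥0} is contained in the real interval (−λ−1, −1). -/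
/-!
The hyperbolic quantity `|z - w|² / (re z · re w)` is invariant under `z ↦ μ / z` and, while
`-λ - 1 < re < -1`, grows by at least `(1 + 1/λ)²` under `z ↦ 1 + z`. Along two orbits in the
left half-plane all points satisfy `|1 + w_n| < λ_{n+1}` (as `|w_{n+1}| > 1`), so they lie in
`-λ - 1 < re < -1` and the quantity stays below `4λ²` while growing geometrically: it vanishes,
and the orbits coincide. Applied to an orbit and its complex conjugate this shows that the orbit
is real. A real orbit in `[-λ - 1, -1]` exists because the inverse maps `x ↦ λ_n / x - 1` preserve
that segment, so their compositions give nested nonempty compact sets of starting values.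
-/

noncomputable section

/-- The orbit of a starting value `w₀` under the non-autonomous dynamical system given by
the Möbius maps `f_{λ_n}(z) = λ_n/(1+z)`: `w_n = f_{λ_n}(w_{n-1})`. -/
def orbit (lams : ℕ → ℝ) (w0 : ℂ) : ℕ → ℂ
  | 0 => w0
  | n + 1 => (lams (n + 1) : ℂ) / (1 + orbit lams w0 n)

open Complex ComplexConjugate Set

lemma nonpos_of_bounded_geometric_growth {d : ℕ → ℝ} {k B : ℝ} (hk : 1 < k)
    (hgrow : ∀ n, k * d n ≤ d (n + 1)) (hbdd : ∀ n, d n ≤ B) : d 0 ≤ 0 := by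
  by_contra! h
  have hpow : ∀ n, k ^ n * d 0 ≤ d n := by
    intro n
    induction n with
    | zero => simp
    | succ n ih =>
      calc k ^ (n + 1) * d 0 = k * (k ^ n * d 0) := by ring
        _ ≤ k * d n := by gcongr
        _ ≤ d (n + 1) := hgrow n
  obtain ⟨n, hn⟩ := pow_unbounded_of_one_lt (B / d 0) hk
  linarith [(div_lt_iff₀ h).1 hn, hpow n, hbdd n]

/-- `2 (cosh d - 1)`, where `d` is the hyperbolic distance between two points of the same
half-plane `re < 0` or `re > 0`. -/
def halfPlaneDelta (z w : ℂ) : ℝ := normSq (z - w) / (z.re * w.re)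

lemma halfPlaneDelta_div {μ : ℝ} (hμ : μ ≠ 0) {z w : ℂ} (hz : z ≠ 0) (hw : w ≠ 0) :
    halfPlaneDelta (μ / z) (μ / w) = halfPlaneDelta z w := by
  set c := μ ^ 2 / (normSq z * normSq w)
  have hc : c ≠ 0 := by
    have := normSq_pos.2 hz; have := normSq_pos.2 hw; positivity
  have hnum : normSq ((μ : ℂ) / z - μ / w) = c * normSq (z - w) := by
    rw [show (μ : ℂ) / z - μ / w = μ * (w - z) / (z * w) by field_simp, normSq_div, normSq_mul,
      normSq_mul, normSq_ofReal, ← normSq_neg, neg_sub]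
    ring
  have hre : (μ / z : ℂ).re * (μ / w : ℂ).re = c * (z.re * w.re) := by
    simp only [div_re, ofReal_re, ofReal_im, zero_mul, zero_div, add_zero]
    ring
  rw [halfPlaneDelta, halfPlaneDelta, hre, hnum, mul_div_mul_left _ _ hc]

lemma halfPlaneDelta_one_add_ge {lam : ℝ} {z w : ℂ} (hz : z.re ∈ Ioo (-lam - 1) (-1))
    (hw : w.re ∈ Ioo (-lam - 1) (-1)) :
    (1 + lam⁻¹) ^ 2 * halfPlaneDelta z w ≤ halfPlaneDelta (1 + z) (1 + w) := by
  have hlam : 0 < lam := by linarith [hz.1, hz.2]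
  have hratio : ∀ x : ℝ, x ∈ Ioo (-lam - 1) (-1) → (1 + lam⁻¹) * -(1 + x) ≤ -x := by
    rintro x ⟨hx₁, hx₂⟩
    have : -(1 + x) * lam⁻¹ ≤ 1 := by rw [← div_eq_mul_inv, div_le_one hlam]; linarith
    linarith
  have hden : (1 + lam⁻¹) ^ 2 * ((1 + z.re) * (1 + w.re)) ≤ z.re * w.re := by
    have := mul_le_mul (hratio _ hz) (hratio _ hw)
      (by have := inv_pos.2 hlam; nlinarith [hw.2]) (by linarith [hz.2])
    linarith
  rw [halfPlaneDelta, halfPlaneDelta, add_sub_add_left_eq_sub, add_re, add_re, one_re,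
    mul_div_assoc', div_le_div_iff₀ (by nlinarith [hz.2, hw.2]) (by nlinarith [hz.2, hw.2])]
  calc (1 + lam⁻¹) ^ 2 * normSq (z - w) * ((1 + z.re) * (1 + w.re))
      = normSq (z - w) * ((1 + lam⁻¹) ^ 2 * ((1 + z.re) * (1 + w.re))) := by ring
    _ ≤ normSq (z - w) * (z.re * w.re) := by gcongr; exact normSq_nonneg _

lemma eq_of_halfPlaneDelta_nonpos {z w : ℂ} (hzw : 0 < z.re * w.re)
    (h : halfPlaneDelta z w ≤ 0) : z = w := by
  rw [halfPlaneDelta, div_le_iff₀ hzw, zero_mul] at h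
  exact sub_eq_zero.1 (normSq_eq_zero.1 (h.antisymm (normSq_nonneg _)))

lemma re_ofReal_div_neg_iff {μ : ℝ} (hμ : 0 < μ) {z : ℂ} :
    ((μ : ℂ) / z).re < 0 ↔ z.re < 0 := by
  rcases eq_or_ne z 0 with rfl | hz
  · simp
  have hn := normSq_pos.2 hz
  rw [div_eq_mul_inv, re_ofReal_mul, inv_re]
  refine ⟨fun h => ?_, fun h => mul_neg_of_pos_of_neg hμ (div_neg_of_neg_of_pos h hn)⟩
  by_contra! h'
  linarith [mul_nonneg hμ.le (div_nonneg h' hn.le)]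

section LeftHalfPlane

variable {lam : ℝ} {lams : ℕ → ℝ} {w0 w0' : ℂ}

lemma orbit_succ (lams : ℕ → ℝ) (w0 : ℂ) (n : ℕ) :
    orbit lams w0 (n + 1) = lams (n + 1) / (1 + orbit lams w0 n) := rfl

lemma orbit_conj (lams : ℕ → ℝ) (w0 : ℂ) (n : ℕ) :
    orbit lams (conj w0) n = conj (orbit lams w0 n) := by
  induction n with
  | zero => rfl
  | succ n ih => rw [orbit_succ, orbit_succ, ih, map_div₀, map_add, map_one, conj_ofReal]

lemma one_add_orbit_re_neg (hpos : ∀ n, 0 < lams (n + 1))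
    (hw : ∀ n, (orbit lams w0 n).re < 0) (n : ℕ) : (1 + orbit lams w0 n).re < 0 :=
  (re_ofReal_div_neg_iff (hpos n)).1 (hw (n + 1))

lemma norm_one_add_orbit_lt (hpos : ∀ n, 0 < lams (n + 1))
    (hw : ∀ n, (orbit lams w0 n).re < 0) (n : ℕ) :
    ‖1 + orbit lams w0 n‖ < lams (n + 1) := by
  have hne : 1 + orbit lams w0 n ≠ 0 := fun h => by
    simpa [h] using one_add_orbit_re_neg hpos hw n
  have hnext : 1 < ‖orbit lams w0 (n + 1)‖ := by
    have hre := one_add_orbit_re_neg hpos hw (n + 1)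
    have hlow := (abs_le.1 (abs_re_le_norm (orbit lams w0 (n + 1)))).1
    rw [add_re, one_re] at hre
    linarith
  have hprod : ‖orbit lams w0 (n + 1)‖ * ‖1 + orbit lams w0 n‖ = lams (n + 1) := by
    rw [← norm_mul, orbit_succ, div_mul_cancel₀ _ hne, norm_real,
      Real.norm_of_nonneg (hpos n).le]
  calc ‖1 + orbit lams w0 n‖ = 1 * ‖1 + orbit lams w0 n‖ := (one_mul _).symm
    _ < ‖orbit lams w0 (n + 1)‖ * ‖1 + orbit lams w0 n‖ := by gcongr
    _ = lams (n + 1) := hprod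

lemma orbit_re_mem_Ioo (hpos : ∀ n, 0 < lams (n + 1)) (hle : ∀ n, lams (n + 1) ≤ lam)
    (hw : ∀ n, (orbit lams w0 n).re < 0) (n : ℕ) :
    (orbit lams w0 n).re ∈ Ioo (-lam - 1) (-1) := by
  have hre := one_add_orbit_re_neg hpos hw n
  have hlow := (abs_le.1 (abs_re_le_norm (1 + orbit lams w0 n))).1
  have hnorm := norm_one_add_orbit_lt hpos hw n
  rw [add_re, one_re] at hre hlow
  constructor <;> linarith [hle n]

lemma halfPlaneDelta_orbit_le (hpos : ∀ n, 0 < lams (n + 1)) (hle : ∀ n, lams (n + 1) ≤ lam)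
    (hw : ∀ n, (orbit lams w0 n).re < 0) (hw' : ∀ n, (orbit lams w0' n).re < 0) (n : ℕ) :
    halfPlaneDelta (orbit lams w0 n) (orbit lams w0' n) ≤ (2 * lam) ^ 2 := by
  have hnorm : ‖orbit lams w0 n - orbit lams w0' n‖ ≤ 2 * lam :=
    calc ‖orbit lams w0 n - orbit lams w0' n‖
        = ‖(1 + orbit lams w0 n) - (1 + orbit lams w0' n)‖ := by rw [add_sub_add_left_eq_sub]
      _ ≤ ‖1 + orbit lams w0 n‖ + ‖1 + orbit lams w0' n‖ := norm_sub_le _ _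
      _ ≤ 2 * lam := by
        linarith [norm_one_add_orbit_lt hpos hw n, norm_one_add_orbit_lt hpos hw' n, hle n]
  have hre := (orbit_re_mem_Ioo hpos hle hw n).2
  have hre' := (orbit_re_mem_Ioo hpos hle hw' n).2
  calc halfPlaneDelta (orbit lams w0 n) (orbit lams w0' n)
      ≤ normSq (orbit lams w0 n - orbit lams w0' n) :=
        div_le_self (normSq_nonneg _) (by nlinarith)
    _ ≤ (2 * lam) ^ 2 := by
        rw [normSq_eq_norm_sq]; exact pow_le_pow_left₀ (norm_nonneg _) hnorm 2

lemma halfPlaneDelta_orbit_succ_ge (hpos : ∀ n, 0 < lams (n + 1))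
    (hle : ∀ n, lams (n + 1) ≤ lam) (hw : ∀ n, (orbit lams w0 n).re < 0)
    (hw' : ∀ n, (orbit lams w0' n).re < 0) (n : ℕ) :
    (1 + lam⁻¹) ^ 2 * halfPlaneDelta (orbit lams w0 n) (orbit lams w0' n) ≤
      halfPlaneDelta (orbit lams w0 (n + 1)) (orbit lams w0' (n + 1)) := by
  have hne : ∀ {v : ℂ}, v.re < 0 → v ≠ 0 := fun h h0 => by simp [h0] at h
  rw [orbit_succ, orbit_succ, halfPlaneDelta_div (hpos n).ne'
    (hne (one_add_orbit_re_neg hpos hw n)) (hne (one_add_orbit_re_neg hpos hw' n))]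
  exact halfPlaneDelta_one_add_ge (orbit_re_mem_Ioo hpos hle hw n)
    (orbit_re_mem_Ioo hpos hle hw' n)

theorem eq_of_forall_orbit_re_neg (hpos : ∀ n, 0 < lams (n + 1))
    (hle : ∀ n, lams (n + 1) ≤ lam) (hw : ∀ n, (orbit lams w0 n).re < 0)
    (hw' : ∀ n, (orbit lams w0' n).re < 0) : w0 = w0' := by
  have hlam : 0 < lam := (hpos 0).trans_le (hle 0)
  have hk : 1 < (1 + lam⁻¹) ^ 2 := by have := inv_pos.2 hlam; nlinarith
  refine eq_of_halfPlaneDelta_nonpos (mul_pos_of_neg_of_neg (hw 0) (hw' 0)) ?_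
  exact nonpos_of_bounded_geometric_growth
    (d := fun n => halfPlaneDelta (orbit lams w0 n) (orbit lams w0' n)) hk
    (halfPlaneDelta_orbit_succ_ge hpos hle hw hw') (halfPlaneDelta_orbit_le hpos hle hw hw')

theorem orbit_im_eq_zero (hpos : ∀ n, 0 < lams (n + 1)) (hle : ∀ n, lams (n + 1) ≤ lam)
    (hw : ∀ n, (orbit lams w0 n).re < 0) (n : ℕ) : (orbit lams w0 n).im = 0 := by
  have hconj : conj w0 = w0 :=
    eq_of_forall_orbit_re_neg hpos hle (fun n => by rw [orbit_conj, conj_re]; exact hw n) hw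
  rw [← conj_eq_iff_im, ← orbit_conj, hconj]

end LeftHalfPlane

def orbitStart (lams : ℕ → ℝ) : ℕ → ℂ → ℂ
  | 0 => id
  | N + 1 => orbitStart lams N ∘ fun z => (lams (N + 1) : ℂ) / z - 1

lemma orbit_orbitStart {lams : ℕ → ℝ} (hne : ∀ n, lams (n + 1) ≠ 0) (N : ℕ) (z : ℂ) :
    orbit lams (orbitStart lams N z) N = z := by
  induction N generalizing z with
  | zero => rfl
  | succ N ih =>
    rw [orbit_succ, orbitStart, Function.comp_apply, ih, add_sub_cancel,
      div_div_cancel₀ (ofReal_ne_zero.2 (hne N))]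

theorem exists_forall_orbit_mem {lams : ℕ → ℝ} {K : Set ℂ} (hK : IsCompact K)
    (hKne : K.Nonempty) (hK0 : 0 ∉ K) (hne : ∀ n, lams (n + 1) ≠ 0)
    (hmaps : ∀ n, MapsTo (fun z => (lams (n + 1) : ℂ) / z - 1) K K) :
    ∃ w0, ∀ n, orbit lams w0 n ∈ K := by
  have hcont : ∀ N, ContinuousOn (orbitStart lams N) K := by
    intro N
    induction N with
    | zero => exact continuousOn_id
    | succ N ih =>
      refine ih.comp ((continuousOn_const.div continuousOn_id ?_).sub continuousOn_const) (hmaps N)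
      exact fun z hz h0 => hK0 (h0 ▸ hz)
  have hanti : ∀ N, orbitStart lams (N + 1) '' K ⊆ orbitStart lams N '' K := fun N => by
    rw [orbitStart, image_comp]
    exact image_mono (hmaps N).image_subset
  obtain ⟨w0, hw0⟩ := IsCompact.nonempty_iInter_of_sequence_nonempty_isCompact_isClosed _ hanti
    (fun N => hKne.image _) (hK.image_of_continuousOn (hcont 0))
    (fun N => (hK.image_of_continuousOn (hcont N)).isClosed)
  refine ⟨w0, fun n => ?_⟩
  obtain ⟨z, hz, rfl⟩ := mem_iInter.1 hw0 n
  rwa [orbit_orbitStart hne]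

lemma mapsTo_div_sub_one_Icc {lam μ : ℝ} (hμ : μ ∈ Ioc 0 lam) :
    MapsTo (fun x : ℝ => μ / x - 1) (Icc (-lam - 1) (-1)) (Icc (-lam - 1) (-1)) := by
  rintro x ⟨hx₁, hx₂⟩
  have hx : x < 0 := by linarith
  have hlow : -μ ≤ μ / x := by rw [le_div_iff_of_neg hx]; nlinarith [hμ.1]
  have hhigh : μ / x ≤ 0 := div_nonpos_of_nonneg_of_nonpos hμ.1.le hx.le
  constructor <;> linarith [hμ.2]

theorem exists_forall_orbit_mem_Icc {lam : ℝ} {lams : ℕ → ℝ}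
    (hl : ∀ n, lams (n + 1) ∈ Ioc 0 lam) :
    ∃ w0, ∀ n, orbit lams w0 n ∈ ((↑) : ℝ → ℂ) '' Icc (-lam - 1) (-1) := by
  have hlam : 0 < lam := (hl 0).1.trans_le (hl 0).2
  refine exists_forall_orbit_mem (isCompact_Icc.image continuous_ofReal)
    ((nonempty_Icc.2 (by linarith)).image _) ?_ (fun n => (hl n).1.ne') fun n => ?_
  · rintro ⟨x, hx, hx0⟩
    linarith [hx.2, ofReal_eq_zero.1 hx0]
  · rintro _ ⟨x, hx, rfl⟩
    exact ⟨_, mapsTo_div_sub_one_Icc (hl n) hx, by push_cast; rfl⟩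

theorem unique_left_half_plane_orbit_general (lam : ℝ) (lams : ℕ → ℝ)
    (hl : ∀ n : ℕ, 1 ≤ n → lams n ∈ Set.Ioc 0 lam) :
    (∃! w0 : ℂ, ∀ n : ℕ, (orbit lams w0 n).re < 0) ∧
    ∀ w0 : ℂ, (∀ n : ℕ, (orbit lams w0 n).re < 0) →
      ∀ n : ℕ, (orbit lams w0 n).im = 0 ∧
        (orbit lams w0 n).re ∈ Set.Ioo (-lam - 1) (-1) := by
  have hl' : ∀ n, lams (n + 1) ∈ Ioc 0 lam := fun n => hl (n + 1) (Nat.le_add_left 1 n)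
  have hpos : ∀ n, 0 < lams (n + 1) := fun n => (hl' n).1
  have hle : ∀ n, lams (n + 1) ≤ lam := fun n => (hl' n).2
  obtain ⟨w0, hw0⟩ := exists_forall_orbit_mem_Icc hl'
  have hw0_re : ∀ n, (orbit lams w0 n).re < 0 := fun n => by
    obtain ⟨x, hx, hxw⟩ := hw0 n
    rw [← hxw, ofReal_re]
    linarith [hx.2]
  refine ⟨⟨w0, hw0_re, fun w hw => eq_of_forall_orbit_re_neg hpos hle hw hw0_re⟩, ?_⟩
  exact fun w hw n => ⟨orbit_im_eq_zero hpos hle hw n, orbit_re_mem_Ioo hpos hle hw n⟩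

/-- **Lemma 3.3.** For `λ > 0` and a sequence `(λ_n)` in `(0,λ]`, there is
a unique starting value `w₀ ∈ ℂ` whose orbit under the maps `f_{λ_n}(z) = λ_n/(1+z)` stays
in the open left half-plane; moreover this orbit is contained in the real interval
`(−λ−1, −1)`. -/
theorem unique_left_half_plane_orbit (lam : ℝ) (hlam : 0 < lam) (lams : ℕ → ℝ)
    (hl : ∀ n : ℕ, 1 ≤ n → lams n ∈ Set.Ioc 0 lam) :
    (∃! w0 : ℂ, ∀ n : ℕ, (orbit lams w0 n).re < 0) ∧
    ∀ w0 : ℂ, (∀ n : ℕ, (orbit lams w0 n).re < 0) →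
      ∀ n : ℕ, (orbit lams w0 n).im = 0 ∧
        (orbit lams w0 n).re ∈ Set.Ioo (-lam - 1) (-1) :=
  unique_left_half_plane_orbit_general lam lams hl

end
end

section
/- Given λ > 0, C > 0 and α ∈ (0,1), there exists C' > 0 such that the following holds: for any two sequences (λ_n) and (λ̂_n) in (0,λ] satisfying |λ_n − λ̂_n| < C·α^n for all n ∈ ℕ, the associated orbits (w_n) and (ŵ_n) (the unique orbits under z ↦ λ_n/(1+z), respectively z ↦ λ̂_n/(1+z), that remain in the left half-plane) satisfy |w_n − ŵ_n| ≤ C'·α^n for all n ∈ ℕ. -/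
/-!
Run the recursion backwards, `w_n = λ_{n+1} / w_{n+1} - 1`. Since `w_{n+1}` lies in the left
half-plane, `Re w_n < -1`; hence `1 < |w_n| ≤ 1 + λ` and `|1 + w_n| ≤ γ |w_n|` with
`γ = √(1 - (1 + λ)⁻²) < 1`. In the distance `|z - z'| / √(|z| |z'|)` one backward step from
`(w_{n+1}, ŵ_{n+1})` to `(w_n, ŵ_n)` contracts by `γ` up to the error
`|λ_{n+1} - λ̂_{n+1}| < C α^{n+1}`. Unrolling this to infinity, with the a priori bound
`2 (1 + λ)` as the tail, bounds the weighted distance of `w_n, ŵ_n` by `C α^{n+1} / (1 - α γ)`,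
and `√(|w_n| |ŵ_n|) ≤ 1 + λ` converts this back.
-/

noncomputable section

lemma re_neg_of_re_ofReal_div_neg {a : ℝ} (ha : 0 ≤ a) {z : ℂ} (h : ((a : ℂ) / z).re < 0) :
    z.re < 0 := by
  rw [div_eq_mul_inv, Complex.re_ofReal_mul, Complex.inv_re] at h
  by_contra! hz
  exact h.not_ge (mul_nonneg ha (div_nonneg hz (Complex.normSq_nonneg z)))

lemma one_lt_norm_of_re_lt_neg_one {z : ℂ} (hz : z.re < -1) : 1 < ‖z‖ := by
  linarith [neg_le_abs z.re, Complex.abs_re_le_norm z]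

lemma sq_norm_one_add_add_one_le {z : ℂ} (hz : z.re < -1) : ‖1 + z‖ ^ 2 + 1 ≤ ‖z‖ ^ 2 := by
  rw [Complex.sq_norm, Complex.sq_norm, Complex.normSq_apply, Complex.normSq_apply]
  simp only [Complex.add_re, Complex.add_im, Complex.one_re, Complex.one_im]
  nlinarith

lemma norm_one_add_le_mul_norm {r : ℝ} (hr : 0 < r) {z : ℂ} (hz : z.re < -1) (hzr : ‖z‖ ≤ r) :
    ‖1 + z‖ ≤ √(1 - (r⁻¹) ^ 2) * ‖z‖ := by
  have hrz : ‖z‖ * r⁻¹ ≤ 1 := by rw [← div_eq_mul_inv]; exact (div_le_one hr).2 hzr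
  have h1 : ‖1 + z‖ ^ 2 ≤ (1 - (r⁻¹) ^ 2) * ‖z‖ ^ 2 := by
    nlinarith [sq_norm_one_add_add_one_le hz, mul_nonneg (norm_nonneg z) (inv_pos.2 hr).le]
  calc ‖1 + z‖ ≤ √((1 - (r⁻¹) ^ 2) * ‖z‖ ^ 2) := Real.le_sqrt_of_sq_le h1
    _ = √(1 - (r⁻¹) ^ 2) * ‖z‖ := by
      rw [Real.sqrt_mul' _ (sq_nonneg _), Real.sqrt_sq (norm_nonneg z)]

lemma sqrt_one_sub_inv_sq_lt_one {r : ℝ} (hr : 0 < r) : √(1 - (r⁻¹) ^ 2) < 1 :=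
  (Real.sqrt_lt' one_pos).2 (by have := inv_pos.2 hr; nlinarith)

lemma min_le_sqrt_mul {a b : ℝ} (ha : 0 ≤ a) (hb : 0 ≤ b) : min a b ≤ √(a * b) :=
  Real.le_sqrt_of_sq_le <| by
    rw [sq]
    exact mul_le_mul (min_le_left a b) (min_le_right a b) (le_min ha hb) ha

lemma norm_ofReal_div_sub_ofReal_div_le {a b : ℝ} (ha : 0 ≤ a) (hb : 0 ≤ b) {u v : ℂ}
    (hu : 1 ≤ ‖u‖) (hv : 1 ≤ ‖v‖) :
    ‖(a : ℂ) / u - b / v‖ ≤ |a - b| + min a b / (‖u‖ * ‖v‖) * ‖u - v‖ := by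
  have hu0 : u ≠ 0 := norm_pos_iff.1 (by linarith)
  have hv0 : v ≠ 0 := norm_pos_iff.1 (by linarith)
  set m := min a b
  -- split off the common part `m` of the numerators
  have hsplit : (a : ℂ) / u - b / v = ((a - m : ℝ) : ℂ) / u - ((b - m : ℝ) : ℂ) / v
      + (m : ℂ) * (v - u) / (u * v) := by
    field_simp
    push_cast
    ring
  have ham : 0 ≤ a - m := sub_nonneg.2 (min_le_left a b)
  have hbm : 0 ≤ b - m := sub_nonneg.2 (min_le_right a b)
  have hm : 0 ≤ m := le_min ha hb
  calc ‖(a : ℂ) / u - b / v‖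
      ≤ (a - m) / ‖u‖ + (b - m) / ‖v‖ + m / (‖u‖ * ‖v‖) * ‖u - v‖ := by
        rw [hsplit]
        refine (norm_add_le _ _).trans (add_le_add ((norm_sub_le _ _).trans_eq ?_) (le_of_eq ?_))
        · rw [norm_div, norm_div, Complex.norm_real, Complex.norm_real, Real.norm_of_nonneg ham,
            Real.norm_of_nonneg hbm]
        · rw [norm_div, norm_mul, norm_mul, Complex.norm_real, Real.norm_of_nonneg hm,
            norm_sub_rev]
          ring
    _ ≤ (a - m) + (b - m) + m / (‖u‖ * ‖v‖) * ‖u - v‖ := by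
        gcongr
        · exact div_le_self ham hu
        · exact div_le_self hbm hv
    _ = |a - b| + m / (‖u‖ * ‖v‖) * ‖u - v‖ := by
        linarith [min_add_max a b, max_sub_min_eq_abs' a b]

lemma norm_ofReal_div_one_add_mul {a : ℝ} (ha : 0 ≤ a) {z : ℂ} (hz : 1 + z ≠ 0) :
    ‖(a : ℂ) / (1 + z)‖ * ‖1 + z‖ = a := by
  rw [norm_div, Complex.norm_real, Real.norm_of_nonneg ha,
    div_mul_cancel₀ _ (norm_ne_zero_iff.2 hz)]

lemma one_add_ne_zero_of_re_lt_neg_one {z : ℂ} (hz : z.re < -1) : 1 + z ≠ 0 := by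
  intro h
  have := congrArg Complex.re h
  simp only [Complex.add_re, Complex.one_re, Complex.zero_re] at this
  linarith

lemma re_lt_neg_one_of_re_ofReal_div_one_add_neg {a : ℝ} (ha : 0 ≤ a) {z : ℂ}
    (h : ((a : ℂ) / (1 + z)).re < 0) : z.re < -1 := by
  have := re_neg_of_re_ofReal_div_neg ha h
  simp only [Complex.add_re, Complex.one_re] at this
  linarith

lemma norm_le_one_add_of_re_ofReal_div_one_add_lt_neg_one {a r : ℝ} (ha : 0 ≤ a) (har : a ≤ r)
    {z : ℂ} (hz : z.re < -1) (hu : ((a : ℂ) / (1 + z)).re < -1) : ‖z‖ ≤ 1 + r := by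
  have hmul := norm_ofReal_div_one_add_mul ha (one_add_ne_zero_of_re_lt_neg_one hz)
  have hu1 := one_lt_norm_of_re_lt_neg_one hu
  have hs : ‖1 + z‖ ≤ a := by nlinarith [norm_nonneg (1 + z)]
  calc ‖z‖ = ‖(1 + z) - 1‖ := by rw [add_sub_cancel_left]
    _ ≤ ‖1 + z‖ + ‖(1 : ℂ)‖ := norm_sub_le _ _
    _ ≤ 1 + r := by rw [norm_one]; linarith

/-- Unlike the plain distance, this one is contracted by a uniform factor along two orbits
run backwards. -/
def weightedDist (z w : ℂ) : ℝ := ‖z - w‖ / √(‖z‖ * ‖w‖)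

lemma weightedDist_nonneg (z w : ℂ) : 0 ≤ weightedDist z w := by
  unfold weightedDist
  positivity

lemma sqrt_mul_weightedDist {z w : ℂ} (hz : z ≠ 0) (hw : w ≠ 0) :
    √(‖z‖ * ‖w‖) * weightedDist z w = ‖z - w‖ :=
  mul_div_cancel₀ _ (Real.sqrt_pos.2 (by positivity)).ne'

lemma weightedDist_le_norm_sub {z w : ℂ} (hz : 1 ≤ ‖z‖) (hw : 1 ≤ ‖w‖) :
    weightedDist z w ≤ ‖z - w‖ :=
  div_le_self (norm_nonneg _) (Real.one_le_sqrt.2 (one_le_mul_of_one_le_of_one_le hz hw))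

lemma norm_sub_le_of_ofReal_div_one_add {a b r : ℝ} (ha : 0 ≤ a) (hb : 0 ≤ b) (hr : 0 < r)
    {z z' : ℂ} (hz : z.re < -1) (hz' : z'.re < -1) (hzr : ‖z‖ ≤ r) (hz'r : ‖z'‖ ≤ r)
    (hu : ((a : ℂ) / (1 + z)).re < -1) (hu' : ((b : ℂ) / (1 + z')).re < -1) :
    ‖z - z'‖ ≤ |a - b| + √(1 - (r⁻¹) ^ 2) * √(‖z‖ * ‖z'‖) *
      weightedDist (a / (1 + z)) (b / (1 + z')) := by
  have hs := norm_one_add_le_mul_norm hr hz hzr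
  have hs' := norm_one_add_le_mul_norm hr hz' hz'r
  have hmul := norm_ofReal_div_one_add_mul ha (one_add_ne_zero_of_re_lt_neg_one hz)
  have hmul' := norm_ofReal_div_one_add_mul hb (one_add_ne_zero_of_re_lt_neg_one hz')
  have hu1 := one_lt_norm_of_re_lt_neg_one hu
  have hu1' := one_lt_norm_of_re_lt_neg_one hu'
  have ha0 : (a : ℂ) ≠ 0 := fun h => by norm_num [h] at hu1
  have hb0 : (b : ℂ) ≠ 0 := fun h => by norm_num [h] at hu1'
  have hdiff : z - z' = (a : ℂ) / (a / (1 + z)) - b / (b / (1 + z')) := by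
    rw [div_div_cancel₀ ha0, div_div_cancel₀ hb0]
    ring
  rw [hdiff]
  generalize (a : ℂ) / (1 + z) = u at *
  generalize (b : ℂ) / (1 + z') = u' at *
  set γ := √(1 - (r⁻¹) ^ 2)
  have hQQ : √(‖u‖ * ‖u'‖) * √(‖u‖ * ‖u'‖) = ‖u‖ * ‖u'‖ := Real.mul_self_sqrt (by positivity)
  have hQ : 0 < √(‖u‖ * ‖u'‖) := Real.sqrt_pos.2 (by positivity)
  have hmin : min a b ≤ √(‖u‖ * ‖u'‖) * (γ * √(‖z‖ * ‖z'‖)) := calc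
    min a b ≤ √(a * b) := min_le_sqrt_mul ha hb
    _ = √(‖u‖ * ‖u'‖) * √(‖1 + z‖ * ‖1 + z'‖) := by
      rw [← Real.sqrt_mul (by positivity), ← hmul, ← hmul']
      ring_nf
    _ ≤ √(‖u‖ * ‖u'‖) * √((γ * γ) * (‖z‖ * ‖z'‖)) := by
      gcongr √(‖u‖ * ‖u'‖) * ?_
      exact Real.sqrt_le_sqrt (by nlinarith [norm_nonneg (1 + z), norm_nonneg (1 + z')])
    _ = √(‖u‖ * ‖u'‖) * (γ * √(‖z‖ * ‖z'‖)) := by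
      rw [Real.sqrt_mul (mul_self_nonneg γ), Real.sqrt_mul_self (Real.sqrt_nonneg _)]
  calc ‖(a : ℂ) / u - b / u'‖ ≤ |a - b| + min a b / (‖u‖ * ‖u'‖) * ‖u - u'‖ :=
        norm_ofReal_div_sub_ofReal_div_le ha hb hu1.le hu1'.le
    _ ≤ |a - b| + √(‖u‖ * ‖u'‖) * (γ * √(‖z‖ * ‖z'‖)) / (‖u‖ * ‖u'‖) * ‖u - u'‖ := by
        gcongr
    _ = |a - b| + γ * √(‖z‖ * ‖z'‖) * weightedDist u u' := by
        rw [weightedDist]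
        set Q := √(‖u‖ * ‖u'‖)
        rw [← hQQ]
        field_simp

lemma weightedDist_le_of_ofReal_div_one_add {a b r : ℝ} (ha : 0 ≤ a) (hb : 0 ≤ b) (hr : 0 < r)
    {z z' : ℂ} (hz : z.re < -1) (hz' : z'.re < -1) (hzr : ‖z‖ ≤ r) (hz'r : ‖z'‖ ≤ r)
    (hu : ((a : ℂ) / (1 + z)).re < -1) (hu' : ((b : ℂ) / (1 + z')).re < -1) :
    weightedDist z z' ≤
      |a - b| + √(1 - (r⁻¹) ^ 2) * weightedDist (a / (1 + z)) (b / (1 + z')) := by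
  have hP : 1 ≤ √(‖z‖ * ‖z'‖) := Real.one_le_sqrt.2 <| one_le_mul_of_one_le_of_one_le
    (one_lt_norm_of_re_lt_neg_one hz).le (one_lt_norm_of_re_lt_neg_one hz').le
  have key := norm_sub_le_of_ofReal_div_one_add ha hb hr hz hz' hzr hz'r hu hu'
  rw [weightedDist, div_le_iff₀ (by linarith)]
  nlinarith [abs_nonneg (a - b), Real.sqrt_nonneg (1 - (r⁻¹) ^ 2),
    weightedDist_nonneg (a / (1 + z)) (b / (1 + z'))]

lemma le_of_le_add_mul_succ {D : ℕ → ℝ} {B c α γ : ℝ} (hc : 0 ≤ c) (hα : 0 ≤ α)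
    (hγ₀ : 0 ≤ γ) (hγ₁ : γ < 1) (hαγ : α * γ < 1) (hB : ∀ k, D k ≤ B)
    (hD : ∀ k, D k ≤ c * α ^ k + γ * D (k + 1)) (n : ℕ) :
    D n ≤ c * α ^ n / (1 - α * γ) := by
  have hunroll : ∀ j n, D n ≤ c * α ^ n / (1 - α * γ) + γ ^ j * B := by
    intro j
    induction j with
    | zero =>
      intro n
      have : 0 ≤ c * α ^ n / (1 - α * γ) := by
        have := sub_pos.2 hαγ
        positivity
      linarith [hB n, pow_zero γ]
    | succ j ih =>
      intro n
      have hne : 1 - α * γ ≠ 0 := (sub_pos.2 hαγ).ne'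
      have hgeom :
          c * α ^ n + γ * (c * α ^ (n + 1) / (1 - α * γ)) = c * α ^ n / (1 - α * γ) := by
        rw [eq_div_iff hne, add_mul, mul_assoc γ, div_mul_cancel₀ _ hne]
        ring
      calc D n ≤ c * α ^ n + γ * (c * α ^ (n + 1) / (1 - α * γ) + γ ^ j * B) := by
            grw [hD n, ih (n + 1)]
        _ = c * α ^ n / (1 - α * γ) + γ ^ (j + 1) * B := by rw [← hgeom]; ring
  have hlim : Filter.Tendsto (fun j => c * α ^ n / (1 - α * γ) + γ ^ j * B) Filter.atTop
      (nhds (c * α ^ n / (1 - α * γ))) := by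
    simpa using tendsto_const_nhds.add
      ((tendsto_pow_atTop_nhds_zero_of_lt_one hγ₀ hγ₁).mul_const B)
  exact ge_of_tendsto' hlim fun j => hunroll j n

section Orbit

variable {lam : ℝ} {lams lams' : ℕ → ℝ} {w0 w0' : ℂ}

lemma re_orbit_lt_neg_one (hpos : ∀ n, 1 ≤ n → 0 < lams n)
    (hw : ∀ n, (orbit lams w0 n).re < 0) (n : ℕ) : (orbit lams w0 n).re < -1 :=
  re_lt_neg_one_of_re_ofReal_div_one_add_neg (hpos (n + 1) n.succ_pos).le (hw (n + 1))

lemma one_lt_norm_orbit (hpos : ∀ n, 1 ≤ n → 0 < lams n)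
    (hw : ∀ n, (orbit lams w0 n).re < 0) (n : ℕ) : 1 < ‖orbit lams w0 n‖ :=
  one_lt_norm_of_re_lt_neg_one (re_orbit_lt_neg_one hpos hw n)

lemma norm_orbit_le (hmem : ∀ n, 1 ≤ n → lams n ∈ Set.Ioc 0 lam)
    (hw : ∀ n, (orbit lams w0 n).re < 0) (n : ℕ) : ‖orbit lams w0 n‖ ≤ 1 + lam :=
  have hre := re_orbit_lt_neg_one (fun n hn => (hmem n hn).1) hw
  norm_le_one_add_of_re_ofReal_div_one_add_lt_neg_one (hmem (n + 1) n.succ_pos).1.le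
    (hmem (n + 1) n.succ_pos).2 (hre n) (hre (n + 1))

lemma weightedDist_orbit_le (hmem : ∀ n, 1 ≤ n → lams n ∈ Set.Ioc 0 lam)
    (hmem' : ∀ n, 1 ≤ n → lams' n ∈ Set.Ioc 0 lam)
    (hw : ∀ n, (orbit lams w0 n).re < 0) (hw' : ∀ n, (orbit lams' w0' n).re < 0) (k : ℕ) :
    weightedDist (orbit lams w0 k) (orbit lams' w0' k) ≤ |lams (k + 1) - lams' (k + 1)| +
      √(1 - ((1 + lam)⁻¹) ^ 2) * weightedDist (orbit lams w0 (k + 1)) (orbit lams' w0' (k + 1)) :=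
  have hre := re_orbit_lt_neg_one (fun n hn => (hmem n hn).1) hw
  have hre' := re_orbit_lt_neg_one (fun n hn => (hmem' n hn).1) hw'
  have hlam : 0 < 1 + lam := by linarith [(hmem 1 le_rfl).1, (hmem 1 le_rfl).2]
  weightedDist_le_of_ofReal_div_one_add (hmem (k + 1) k.succ_pos).1.le
    (hmem' (k + 1) k.succ_pos).1.le hlam (hre k) (hre' k) (norm_orbit_le hmem hw k)
    (norm_orbit_le hmem' hw' k) (hre (k + 1)) (hre' (k + 1))

lemma weightedDist_orbit_le_two_mul (hmem : ∀ n, 1 ≤ n → lams n ∈ Set.Ioc 0 lam)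
    (hmem' : ∀ n, 1 ≤ n → lams' n ∈ Set.Ioc 0 lam)
    (hw : ∀ n, (orbit lams w0 n).re < 0) (hw' : ∀ n, (orbit lams' w0' n).re < 0) (k : ℕ) :
    weightedDist (orbit lams w0 k) (orbit lams' w0' k) ≤ 2 * (1 + lam) := calc
  _ ≤ ‖orbit lams w0 k - orbit lams' w0' k‖ := weightedDist_le_norm_sub
      (one_lt_norm_orbit (fun n hn => (hmem n hn).1) hw k).le
      (one_lt_norm_orbit (fun n hn => (hmem' n hn).1) hw' k).le
  _ ≤ ‖orbit lams w0 k‖ + ‖orbit lams' w0' k‖ := norm_sub_le _ _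
  _ ≤ 2 * (1 + lam) := by linarith [norm_orbit_le hmem hw k, norm_orbit_le hmem' hw' k]

lemma norm_orbit_sub_le_mul_weightedDist (hmem : ∀ n, 1 ≤ n → lams n ∈ Set.Ioc 0 lam)
    (hmem' : ∀ n, 1 ≤ n → lams' n ∈ Set.Ioc 0 lam)
    (hw : ∀ n, (orbit lams w0 n).re < 0) (hw' : ∀ n, (orbit lams' w0' n).re < 0) (n : ℕ) :
    ‖orbit lams w0 n - orbit lams' w0' n‖ ≤
      (1 + lam) * weightedDist (orbit lams w0 n) (orbit lams' w0' n) := by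
  have hone := one_lt_norm_orbit (fun n hn => (hmem n hn).1) hw n
  have hone' := one_lt_norm_orbit (fun n hn => (hmem' n hn).1) hw' n
  have hlam : 0 ≤ 1 + lam := (norm_nonneg _).trans (norm_orbit_le hmem hw n)
  have hweight : √(‖orbit lams w0 n‖ * ‖orbit lams' w0' n‖) ≤ 1 + lam := calc
    _ ≤ √((1 + lam) * (1 + lam)) := Real.sqrt_le_sqrt <|
        mul_le_mul (norm_orbit_le hmem hw n) (norm_orbit_le hmem' hw' n) (norm_nonneg _) hlam
    _ = 1 + lam := Real.sqrt_mul_self hlam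
  rw [← sqrt_mul_weightedDist (norm_pos_iff.1 (one_pos.trans hone))
    (norm_pos_iff.1 (one_pos.trans hone'))]
  exact mul_le_mul_of_nonneg_right hweight (weightedDist_nonneg _ _)

end Orbit

/-- **Lemma 3.4.** Given `λ > 0`, `C > 0` and `α ∈ (0,1)` there is `C' > 0`
such that for any two sequences `(λ_n)`, `(λ̂_n)` in `(0,λ]` with `|λ_n − λ̂_n| < C·αⁿ`
for all `n ≥ 1`, the associated orbits that stay in the left half-plane satisfy
`|w_n − ŵ_n| ≤ C'·αⁿ` for all `n`. -/
theorem close_lams_close_orbits (lam C α : ℝ) (hlam : 0 < lam) (hC : 0 < C)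
    (hα : α ∈ Set.Ioo (0 : ℝ) 1) :
    ∃ C' : ℝ, 0 < C' ∧ ∀ lams lams' : ℕ → ℝ,
      (∀ n : ℕ, 1 ≤ n → lams n ∈ Set.Ioc 0 lam) →
      (∀ n : ℕ, 1 ≤ n → lams' n ∈ Set.Ioc 0 lam) →
      (∀ n : ℕ, 1 ≤ n → |lams n - lams' n| < C * α ^ n) →
      ∀ w0 w0' : ℂ,
        (∀ n : ℕ, (orbit lams w0 n).re < 0) →
        (∀ n : ℕ, (orbit lams' w0' n).re < 0) →
        ∀ n : ℕ, ‖orbit lams w0 n - orbit lams' w0' n‖ ≤ C' * α ^ n := by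
  obtain ⟨hα0, hα1⟩ := hα
  set γ := √(1 - ((1 + lam)⁻¹) ^ 2)
  have hγ1 : γ < 1 := sqrt_one_sub_inv_sq_lt_one (by linarith)
  have hαγ : α * γ < 1 := by nlinarith [Real.sqrt_nonneg (1 - ((1 + lam)⁻¹) ^ 2)]
  refine ⟨(1 + lam) * (C * α / (1 - α * γ)), by have := sub_pos.2 hαγ; positivity, ?_⟩
  intro lams lams' hmem hmem' hclose w0 w0' hw hw' n
  have hstep : ∀ k, weightedDist (orbit lams w0 k) (orbit lams' w0' k) ≤ C * α * α ^ k +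
      γ * weightedDist (orbit lams w0 (k + 1)) (orbit lams' w0' (k + 1)) := fun k => by
    have hclose_k := hclose (k + 1) k.succ_pos
    rw [pow_succ', ← mul_assoc] at hclose_k
    linarith [weightedDist_orbit_le hmem hmem' hw hw' k]
  calc ‖orbit lams w0 n - orbit lams' w0' n‖
      ≤ (1 + lam) * weightedDist (orbit lams w0 n) (orbit lams' w0' n) :=
        norm_orbit_sub_le_mul_weightedDist hmem hmem' hw hw' n
    _ ≤ (1 + lam) * (C * α * α ^ n / (1 - α * γ)) := by
        gcongr
        exact le_of_le_add_mul_succ (by positivity) hα0.le (Real.sqrt_nonneg _) hγ1 hαγ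
          (weightedDist_orbit_le_two_mul hmem hmem' hw hw') hstep n
    _ = (1 + lam) * (C * α / (1 - α * γ)) * α ^ n := by ring

end
end

section
/- Let Δ ∈ ℕ and λ > 0. Let K ⊂ B_{λ/2}(λ/2) be a compact set containing a neighbourhood of the interval [ℓ_Δ(λ), r_Δ(λ)]. Then there exists a constant C > 0 such that for every sequence (λ_n) in [ℓ_Δ(λ), λ], every n ∈ ℕ, and the maps F_n = f_{λ_n} ∘ ⋯ ∘ f_{λ_1}, we have ‖F_n'‖_K ≤ C·|F_n(0) − F_n(λ)|. -/
noncomputable section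

/-- `ℓ_Δ(λ) = λ/(1+λ)^{Δ−1}`. -/
def ellD (Δ : ℕ) (lam : ℝ) : ℝ := lam / (1 + lam) ^ (Δ - 1)

/-- `r_Δ(λ) = λ/(1+ℓ_Δ(λ))`. -/
def rD (Δ : ℕ) (lam : ℝ) : ℝ := lam / (1 + ellD Δ lam)

/-- The Möbius transformation `f_a(z) = a/(1+z)`. -/
def fmob (a : ℝ) (z : ℂ) : ℂ := (a : ℂ) / (1 + z)

/-- The composition `F_n = f_{λ_n} ∘ ⋯ ∘ f_{λ_1}`. -/
def compMob (lams : ℕ → ℝ) : ℕ → ℂ → ℂ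
  | 0, z => z
  | k + 1, z => fmob (lams (k + 1)) (compMob lams k z)

/-!
Each `F_n` is a Möbius map `z ↦ (a z + b)/(c z + d)` with `a, b, c ≥ 0` and `d > 0`, so
`F_n'(z) = (ad - bc)/(cz + d)²` and `F_n(0) - F_n(λ) = -λ(ad - bc)/(d(cλ + d))`: the quotient of
the two is `d(cλ + d) / (λ |cz + d|²)`. On `K`, which lies in the right half-plane and hence at
distance some `δ > 0` from `0`, we have `|cz + d|² ≥ c²δ² + d² ≥ 2δcd`, which bounds this
quotient by `(λ + 2δ)/(2δλ)` independently of `a, b, c, d`.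
-/

open Complex

structure RealMob where
  a : ℝ
  b : ℝ
  c : ℝ
  d : ℝ

namespace RealMob

variable (m : RealMob)

def toFun (z : ℂ) : ℂ := (m.a * z + m.b) / (m.c * z + m.d)

def det : ℝ := m.a * m.d - m.b * m.c

@[simps]
def fmobComp (lam : ℝ) : RealMob := ⟨lam * m.c, lam * m.d, m.a + m.c, m.b + m.d⟩

structure NonnegCoeffs : Prop where
  a_nonneg : 0 ≤ m.a
  b_nonneg : 0 ≤ m.b
  c_nonneg : 0 ≤ m.c
  d_pos : 0 < m.d

variable {m}

theorem NonnegCoeffs.fmobComp (hm : m.NonnegCoeffs) {lam : ℝ} (hlam : 0 ≤ lam) :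
    (m.fmobComp lam).NonnegCoeffs where
  a_nonneg := mul_nonneg hlam hm.c_nonneg
  b_nonneg := mul_nonneg hlam hm.d_pos.le
  c_nonneg := add_nonneg hm.a_nonneg hm.c_nonneg
  d_pos := add_pos_of_nonneg_of_pos hm.b_nonneg hm.d_pos

theorem NonnegCoeffs.denom_ne_zero (hm : m.NonnegCoeffs) {z : ℂ} (hz : 0 ≤ z.re) :
    (m.c : ℂ) * z + m.d ≠ 0 := by
  intro h
  have hre : m.c * z.re + m.d = 0 := by simpa using congrArg re h
  linarith [mul_nonneg hm.c_nonneg hz, hm.d_pos]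

theorem NonnegCoeffs.fmob_toFun (hm : m.NonnegCoeffs) (lam : ℝ) {z : ℂ} (hz : 0 ≤ z.re) :
    fmob lam (m.toFun z) = (m.fmobComp lam).toFun z := by
  have hden := hm.denom_ne_zero hz
  have hden' := (hm.fmobComp zero_le_one).denom_ne_zero hz
  simp only [fmobComp_c, fmobComp_d] at hden'
  push_cast at hden'
  simp only [fmob, toFun, fmobComp_a, fmobComp_b, fmobComp_c, fmobComp_d]
  push_cast
  rw [one_add_div hden, div_div_eq_mul_div,
    div_eq_div_iff (fun h => hden' (by linear_combination h)) hden']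
  ring

theorem hasDerivAt_toFun {z : ℂ} (hz : (m.c : ℂ) * z + m.d ≠ 0) :
    HasDerivAt m.toFun (m.det / ((m.c : ℂ) * z + m.d) ^ 2) z := by
  have hnum : HasDerivAt (fun w : ℂ => m.a * w + m.b) m.a z := by
    simpa using ((hasDerivAt_id z).const_mul (m.a : ℂ)).add_const (m.b : ℂ)
  have hden : HasDerivAt (fun w : ℂ => m.c * w + m.d) m.c z := by
    simpa using ((hasDerivAt_id z).const_mul (m.c : ℂ)).add_const (m.d : ℂ)
  refine (hnum.fun_div hden hz).congr_deriv ?_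
  simp only [det]
  push_cast
  ring

theorem NonnegCoeffs.toFun_zero_sub_toFun (hm : m.NonnegCoeffs) {lam : ℝ} (hlam : 0 ≤ lam) :
    m.toFun 0 - m.toFun lam = ((-(lam * m.det) / (m.d * (m.c * lam + m.d)) : ℝ) : ℂ) := by
  have hd : (m.d : ℂ) ≠ 0 := ofReal_ne_zero.2 hm.d_pos.ne'
  have hden := hm.denom_ne_zero (z := lam) (by simpa using hlam)
  simp only [toFun, det, mul_zero, zero_add]
  push_cast
  rw [div_sub_div _ _ hd hden, div_eq_div_iff (mul_ne_zero hd hden) (mul_ne_zero hd hden)]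
  ring

theorem NonnegCoeffs.mul_le_norm_sq (hm : m.NonnegCoeffs) {lam δ : ℝ} (hlam : 0 ≤ lam)
    (hδ : 0 < δ) {z : ℂ} (hz : 0 ≤ z.re) (hδz : δ ≤ ‖z‖) :
    m.d * (m.c * lam + m.d) ≤ (1 + lam / (2 * δ)) * ‖(m.c : ℂ) * z + m.d‖ ^ 2 := by
  have hnorm :
      ‖(m.c : ℂ) * z + m.d‖ ^ 2 = m.c ^ 2 * ‖z‖ ^ 2 + 2 * m.c * m.d * z.re + m.d ^ 2 := by
    rw [Complex.sq_norm, Complex.sq_norm, normSq_apply, normSq_apply]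
    simp only [add_re, add_im, mul_re, mul_im, ofReal_re, ofReal_im]
    ring
  have hamgm : 2 * δ * (m.c * m.d) ≤ m.c ^ 2 * δ ^ 2 + m.d ^ 2 := by
    nlinarith [sq_nonneg (m.c * δ - m.d)]
  have hlower : m.c ^ 2 * δ ^ 2 + m.d ^ 2 ≤ ‖(m.c : ℂ) * z + m.d‖ ^ 2 := by
    rw [hnorm]
    nlinarith [mul_nonneg (mul_nonneg hm.c_nonneg hm.d_pos.le) hz,
      mul_le_mul_of_nonneg_left (pow_le_pow_left₀ hδ.le hδz 2) (sq_nonneg m.c)]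
  calc m.d * (m.c * lam + m.d) = lam / (2 * δ) * (2 * δ * (m.c * m.d)) + m.d ^ 2 := by
        field_simp
    _ ≤ lam / (2 * δ) * (m.c ^ 2 * δ ^ 2 + m.d ^ 2) + (m.c ^ 2 * δ ^ 2 + m.d ^ 2) := by
        gcongr
        exact le_add_of_nonneg_left (by positivity)
    _ = (1 + lam / (2 * δ)) * (m.c ^ 2 * δ ^ 2 + m.d ^ 2) := by ring
    _ ≤ (1 + lam / (2 * δ)) * ‖(m.c : ℂ) * z + m.d‖ ^ 2 := by gcongr

theorem NonnegCoeffs.norm_deriv_toFun_le (hm : m.NonnegCoeffs) {lam δ : ℝ} (hlam : 0 < lam)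
    (hδ : 0 < δ) {z : ℂ} (hz : 0 ≤ z.re) (hδz : δ ≤ ‖z‖) :
    ‖deriv m.toFun z‖ ≤ (lam + 2 * δ) / (2 * δ * lam) * ‖m.toFun 0 - m.toFun lam‖ := by
  have hden := hm.denom_ne_zero hz
  have hcd : 0 < m.c * lam + m.d :=
    add_pos_of_nonneg_of_pos (mul_nonneg hm.c_nonneg hlam.le) hm.d_pos
  rw [(hasDerivAt_toFun hden).deriv, hm.toFun_zero_sub_toFun hlam.le, norm_div, norm_pow,
    norm_real, norm_real, Real.norm_eq_abs, Real.norm_eq_abs, abs_div, abs_neg, abs_mul,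
    abs_of_pos hlam, abs_of_pos (mul_pos hm.d_pos hcd),
    div_le_iff₀ (pow_pos (norm_pos_iff.2 hden) 2)]
  have hD : 0 < m.d * (m.c * lam + m.d) := mul_pos hm.d_pos hcd
  have hC : (lam + 2 * δ) / (2 * δ * lam) * lam = 1 + lam / (2 * δ) := by
    field_simp
    ring
  calc |m.det| = |m.det| * (m.d * (m.c * lam + m.d)) / (m.d * (m.c * lam + m.d)) :=
        (mul_div_cancel_right₀ _ hD.ne').symm
    _ ≤ |m.det| * ((1 + lam / (2 * δ)) * ‖(m.c : ℂ) * z + m.d‖ ^ 2)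
          / (m.d * (m.c * lam + m.d)) :=
        div_le_div_of_nonneg_right
          (mul_le_mul_of_nonneg_left (hm.mul_le_norm_sq hlam.le hδ hz hδz) (abs_nonneg _)) hD.le
    _ = (lam + 2 * δ) / (2 * δ * lam) * (lam * |m.det| / (m.d * (m.c * lam + m.d)))
          * ‖(m.c : ℂ) * z + m.d‖ ^ 2 := by
        rw [← hC]
        ring

end RealMob

def compMobCoeffs (lams : ℕ → ℝ) : ℕ → RealMob
  | 0 => ⟨1, 0, 0, 1⟩
  | k + 1 => (compMobCoeffs lams k).fmobComp (lams (k + 1))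

section compMobCoeffs

variable {lams : ℕ → ℝ} (hlams : ∀ k, 0 ≤ lams (k + 1))
include hlams

theorem nonnegCoeffs_compMobCoeffs (n : ℕ) : (compMobCoeffs lams n).NonnegCoeffs := by
  induction n with
  | zero => exact ⟨zero_le_one, le_rfl, le_rfl, zero_lt_one⟩
  | succ k ih => exact ih.fmobComp (hlams k)

theorem compMob_eq_toFun (n : ℕ) {z : ℂ} (hz : 0 ≤ z.re) :
    compMob lams n z = (compMobCoeffs lams n).toFun z := by
  induction n with
  | zero => simp [compMob, compMobCoeffs, RealMob.toFun]
  | succ k ih =>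
    rw [compMob, ih, (nonnegCoeffs_compMobCoeffs hlams k).fmob_toFun _ hz, compMobCoeffs]

theorem deriv_compMob (n : ℕ) {z : ℂ} (hz : 0 < z.re) :
    deriv (compMob lams n) z = deriv (compMobCoeffs lams n).toFun z := by
  refine Filter.EventuallyEq.deriv_eq ?_
  filter_upwards [(isOpen_lt continuous_const continuous_re).mem_nhds hz] with w hw
  exact compMob_eq_toFun hlams n hw.le

end compMobCoeffs

theorem re_pos_of_mem_ball {r : ℝ} {z : ℂ} (hz : z ∈ Metric.ball (r : ℂ) r) : 0 < z.re := by
  rw [Metric.mem_ball, dist_comm, dist_eq] at hz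
  have := re_le_norm ((r : ℂ) - z)
  simp only [sub_re, ofReal_re] at this
  linarith

theorem ellD_nonneg (Δ : ℕ) {lam : ℝ} (hlam : 0 ≤ lam) : 0 ≤ ellD Δ lam := by
  unfold ellD
  positivity

theorem compMob_deriv_bound_general (Δ : ℕ) (lam : ℝ) (hlam : 0 < lam) (K : Set ℂ)
    (hK : IsCompact K)
    (hKD : K ⊆ Metric.ball ((lam / 2 : ℝ) : ℂ) (lam / 2)) :
    ∃ C : ℝ, 0 < C ∧ ∀ lams : ℕ → ℝ,
      (∀ n : ℕ, 1 ≤ n → lams n ∈ Set.Icc (ellD Δ lam) lam) →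
      ∀ n : ℕ, 1 ≤ n → ∀ z ∈ K,
        ‖deriv (compMob lams n) z‖ ≤
          C * ‖compMob lams n 0 - compMob lams n ((lam : ℝ) : ℂ)‖ := by
  have hre : ∀ z ∈ K, 0 < z.re := fun z hz => re_pos_of_mem_ball (hKD hz)
  obtain ⟨δ, hδ, hδK⟩ := hK.exists_forall_le' continuous_norm.continuousOn
    fun z hz => norm_pos_iff.2 fun h0 => (hre z hz).ne' (by simp [h0])
  refine ⟨(lam + 2 * δ) / (2 * δ * lam), by positivity, fun lams hlams n _ z hz => ?_⟩
  have hlams₀ : ∀ k, 0 ≤ lams (k + 1) := fun k =>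
    (ellD_nonneg Δ hlam.le).trans (hlams (k + 1) k.succ_pos).1
  rw [deriv_compMob hlams₀ n (hre z hz), compMob_eq_toFun hlams₀ n le_rfl,
    compMob_eq_toFun hlams₀ n (by simpa using hlam.le)]
  exact (nonnegCoeffs_compMobCoeffs hlams₀ n).norm_deriv_toFun_le hlam hδ (hre z hz).le
    (hδK z hz)

/-- **Corollary 3.9.** Let `Δ ∈ ℕ`, `λ > 0` and let `K` be a compact subset
of the open disc `B_{λ/2}(λ/2)` containing a neighbourhood of `[ℓ_Δ(λ), r_Δ(λ)]`.  Then
there is `C > 0` such that for every sequence `(λ_n)` in `[ℓ_Δ(λ), λ]` and every `n ≥ 1`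
the composition `F_n = f_{λ_n} ∘ ⋯ ∘ f_{λ_1}` satisfies
`‖F_n'‖_K ≤ C·|F_n(0) − F_n(λ)|`. -/
theorem compMob_deriv_bound (Δ : ℕ) (lam : ℝ) (hlam : 0 < lam) (K : Set ℂ)
    (hK : IsCompact K)
    (hKD : K ⊆ Metric.ball ((lam / 2 : ℝ) : ℂ) (lam / 2))
    (hnbhd : (fun x : ℝ => (x : ℂ)) '' Set.Icc (ellD Δ lam) (rD Δ lam) ⊆ interior K) :
    ∃ C : ℝ, 0 < C ∧ ∀ lams : ℕ → ℝ,
      (∀ n : ℕ, 1 ≤ n → lams n ∈ Set.Icc (ellD Δ lam) lam) →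
      ∀ n : ℕ, 1 ≤ n → ∀ z ∈ K,
        ‖deriv (compMob lams n) z‖ ≤
          C * ‖compMob lams n 0 - compMob lams n ((lam : ℝ) : ℂ)‖ :=
  compMob_deriv_bound_general Δ lam hlam K hK hKD

end
end
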